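/- arXiv:2003.13477 — 4 statements merged into one kernel-verified Lean document; each statement's English description precedes it below -/
import Mathlib

section
/- A linear operator $T$ between $RN$ modules $S^1$ and $S^2$ is almost surely bounded (i.e., there exists $\xi \in L^0_+(\mathcal{F})$ with $\|Tx\|_2 \le \xi\|x\|_1$ for all $x$) if and only if $T$ is a continuous module homomorphism with respect to the $(\varepsilon,\lambda)$-topologies. -/
/- Preamble: random normed modules over `L⁰(𝓕,K)`, the `(ε,λ)`-topology,
`C₀`-semigroups of continuous module homomorphisms and resolvents. -/

open MeasureTheory MeasureTheory.AEEqFun Filter Set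
noncomputable section

namespace MeasureTheory.AEEqFun
variable {α : Type*} [MeasurableSpace α] {μ : Measure α}
variable {γ : Type*} [TopologicalSpace γ] [CommRing γ] [IsTopologicalRing γ]

noncomputable instance instNatCast' : NatCast (α →ₘ[μ] γ) := ⟨fun n => const α (n : γ)⟩
noncomputable instance instIntCast' : IntCast (α →ₘ[μ] γ) := ⟨fun n => const α (n : γ)⟩

/-- `L⁰(𝓕,K)` is a commutative ring under the pointwise operations. -/
noncomputable instance instCommRing' : CommRing (α →ₘ[μ] γ) :=
  toGerm_injective.commRing toGerm zero_toGerm one_toGerm add_toGerm mul_toGerm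
    neg_toGerm sub_toGerm (fun n x => smul_toGerm n x) (fun n x => smul_toGerm n x)
    pow_toGerm (fun _ => rfl) (fun _ => rfl)
end MeasureTheory.AEEqFun

namespace RNTheory

variable {Ω : Type*} [MeasurableSpace Ω] {μ : Measure Ω}

/-- The pointwise absolute value `|ξ| ∈ L⁰₊(𝓕)` of `ξ ∈ L⁰(𝓕,K)`. -/
def l0abs {K : Type*} [RCLike K] (ξ : Ω →ₘ[μ] K) : Ω →ₘ[μ] ℝ :=
  ξ.comp (fun a => ‖a‖) continuous_norm

/-- Pointwise exponential on `L⁰(𝓕,ℝ)`. -/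
def l0exp (ξ : Ω →ₘ[μ] ℝ) : Ω →ₘ[μ] ℝ := ξ.comp Real.exp Real.continuous_exp

/-- Pointwise real part on `L⁰(𝓕,ℂ)`. -/
def l0re (ξ : Ω →ₘ[μ] ℂ) : Ω →ₘ[μ] ℝ := ξ.comp Complex.re Complex.continuous_re

/-- The embedding of `L⁰(𝓕,ℝ)` into `L⁰(𝓕,K)`. -/
def l0ofReal (K : Type*) [RCLike K] (ξ : Ω →ₘ[μ] ℝ) : Ω →ₘ[μ] K :=
  ξ.comp (fun r => (RCLike.ofReal r : K)) RCLike.continuous_ofReal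

/-- The constant element of `L⁰(𝓕,K)` given by the real number `t`. -/
def rconst (K : Type*) [RCLike K] (μ : Measure Ω) (t : ℝ) : Ω →ₘ[μ] K :=
  AEEqFun.const Ω ((RCLike.ofReal t : K))

/-- `ξ ∈ L⁰₊₊(𝓕)`, i.e. `ξ > 0` on `Ω`. -/
def L0pos (ξ : Ω →ₘ[μ] ℝ) : Prop := ∀ᵐ ω ∂μ, 0 < ξ ω

section Top

variable {S : Type*} [AddCommGroup S]

/-- The `(ε,λ)`-neighborhood of `x₀`: all `y` with `P(‖y - x₀‖ < ε) > 1 - λ`. -/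
def Nset (nrm : S → Ω →ₘ[μ] ℝ) (x₀ : S) (ε lam : ℝ) : Set S :=
  {y | 1 - lam < (μ {ω | nrm (y - x₀) ω < ε}).toReal}

theorem Nset_mono [IsFiniteMeasure μ] (nrm : S → Ω →ₘ[μ] ℝ) (x₀ : S) {ε₁ ε₂ lam₁ lam₂ : ℝ}
    (hε : ε₁ ≤ ε₂) (hlam : lam₁ ≤ lam₂) : Nset nrm x₀ ε₁ lam₁ ⊆ Nset nrm x₀ ε₂ lam₂ := by
  intro y hy
  have h1 : (μ {ω | nrm (y - x₀) ω < ε₁}).toReal ≤ (μ {ω | nrm (y - x₀) ω < ε₂}).toReal :=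
    ENNReal.toReal_mono (measure_ne_top μ _) (measure_mono (fun ω h => lt_of_lt_of_le h hε))
  exact lt_of_le_of_lt (by linarith) (lt_of_lt_of_le hy h1)

/-- The `(ε,λ)`-topology on an `RN` module. -/
def elTop [IsFiniteMeasure μ] (nrm : S → Ω →ₘ[μ] ℝ) : TopologicalSpace S where
  IsOpen U := ∀ x ∈ U, ∃ ε > (0:ℝ), ∃ lam : ℝ, 0 < lam ∧ lam < 1 ∧ Nset nrm x ε lam ⊆ U
  isOpen_univ := fun _ _ => ⟨1, one_pos, 1/2, by norm_num, by norm_num, fun _ _ => trivial⟩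
  isOpen_inter := by
    intro U V hU hV x hx
    obtain ⟨ε₁, hε₁, l₁, hl₁, hl₁', hN₁⟩ := hU x hx.1
    obtain ⟨ε₂, hε₂, l₂, hl₂, hl₂', hN₂⟩ := hV x hx.2
    refine ⟨min ε₁ ε₂, lt_min hε₁ hε₂, min l₁ l₂, lt_min hl₁ hl₂,
      lt_of_le_of_lt (min_le_left _ _) hl₁', fun y hy => ⟨?_, ?_⟩⟩
    · exact hN₁ (Nset_mono nrm x (min_le_left _ _) (min_le_left _ _) hy)
    · exact hN₂ (Nset_mono nrm x (min_le_right _ _) (min_le_right _ _) hy)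
  isOpen_sUnion := by
    intro s hs x hx
    obtain ⟨U, hUs, hxU⟩ := hx
    obtain ⟨ε, hε, lam, h1, h2, hN⟩ := hs U hUs x hxU
    exact ⟨ε, hε, lam, h1, h2, fun y hy => ⟨U, hUs, hN hy⟩⟩

/-- A sequence in an `RN` module is Cauchy (in probability). -/
def IsCauchyRN (nrm : S → Ω →ₘ[μ] ℝ) (x : ℕ → S) : Prop :=
  ∀ ε : ℝ, 0 < ε → ∃ N : ℕ, ∀ m ≥ N, ∀ n ≥ N,
    (μ {ω | ε ≤ nrm (x m - x n) ω}).toReal < ε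

/-- The `RN` module `S` is complete: every Cauchy sequence converges in the
`(ε,λ)`-topology. -/
def IsCompleteRN [IsFiniteMeasure μ] (nrm : S → Ω →ₘ[μ] ℝ) : Prop :=
  ∀ x : ℕ → S, IsCauchyRN nrm x → ∃ y, Tendsto x atTop (@nhds S (elTop nrm) y)

end Top

section RNModule

variable (K : Type*) [RCLike K] {S : Type*} [AddCommGroup S] [Module (Ω →ₘ[μ] K) S]

/-- `(S, nrm)` is a random normed module (`RN` module) over `K` with base `(Ω,𝓕,P)`. -/
structure IsRNNorm (nrm : S → Ω →ₘ[μ] ℝ) : Prop where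
  nonneg : ∀ x, 0 ≤ nrm x
  smul_eq : ∀ (ξ : Ω →ₘ[μ] K) (x : S), nrm (ξ • x) = l0abs ξ * nrm x
  add_le : ∀ x y, nrm (x + y) ≤ nrm x + nrm y
  definite : ∀ x, nrm x = 0 → x = 0

section Semigroup
variable [IsFiniteMeasure μ]

/-- A family `{T t : t ≥ 0}` of continuous module homomorphisms (equivalently, of a.s. bounded
module homomorphisms) forming a `C₀`-semigroup on the `RN` module `S`. -/
structure IsC0Semigroup (nrm : S → Ω →ₘ[μ] ℝ) (T : ℝ → S →ₗ[Ω →ₘ[μ] K] S) : Prop where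
  bounded : ∀ t, 0 ≤ t → ∃ ξ : Ω →ₘ[μ] ℝ, 0 ≤ ξ ∧ ∀ x, nrm (T t x) ≤ ξ * nrm x
  id_eq : T 0 = LinearMap.id
  comp_eq : ∀ s t, 0 ≤ s → 0 ≤ t → T (s + t) = (T s).comp (T t)
  strong_cont : ∀ x : S, Tendsto (fun t => T t x) (nhdsWithin 0 (Ioi 0)) (@nhds S (elTop nrm) x)

/-- The `C₀`-semigroup `T` is a.s. bounded: `⋁_{t ∈ [0,L]} ‖T(t)‖ ∈ L⁰₊` for some `L > 0`. -/
def IsASBounded (nrm : S → Ω →ₘ[μ] ℝ) (T : ℝ → S →ₗ[Ω →ₘ[μ] K] S) : Prop :=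
  ∃ L : ℝ, 0 < L ∧ ∃ ξ : Ω →ₘ[μ] ℝ, 0 ≤ ξ ∧ ∀ t ∈ Icc 0 L, ∀ x, nrm (T t x) ≤ ξ * nrm x

/-- `GenRel nrm T x y` says `x ∈ D(A)` and `y = A x`, where `(A, D(A))` is the infinitesimal
generator of the semigroup `T`: `y = lim_{t ↓ 0} (T(t)x - x)/t` in the `(ε,λ)`-topology. -/
def GenRel (nrm : S → Ω →ₘ[μ] ℝ) (T : ℝ → S →ₗ[Ω →ₘ[μ] K] S) (x y : S) : Prop :=
  Tendsto (fun t : ℝ => rconst K μ t⁻¹ • (T t x - x)) (nhdsWithin 0 (Ioi 0))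
    (@nhds S (elTop nrm) y)

end Semigroup

/-- `R` is the resolvent `R(ξ,A) = (ξI - A)⁻¹ ∈ B(S)` of the module homomorphism
`A : D(A) → S`, i.e. `ξ ∈ ρ(A)`. -/
structure IsResolvent (nrm : S → Ω →ₘ[μ] ℝ) (p : Submodule (Ω →ₘ[μ] K) S)
    (A : p →ₗ[Ω →ₘ[μ] K] S) (ξ : Ω →ₘ[μ] K) (R : S →ₗ[Ω →ₘ[μ] K] S) : Prop where
  mem : ∀ x : S, R x ∈ p
  right_inv : ∀ x : S, ξ • R x - A ⟨R x, mem x⟩ = x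
  left_inv : ∀ y : p, R (ξ • (y : S) - A y) = (y : S)
  bounded : ∃ c : Ω →ₘ[μ] ℝ, 0 ≤ c ∧ ∀ x, nrm (R x) ≤ c * nrm x

end RNModule

end RNTheory

open RNTheory

/-!
If `‖Tx‖ ≤ ξ‖x‖`, then `T` is continuous because `ξ` is below a constant off a set of small
probability. It is `L⁰`-linear because the bound forces `T` to commute with every idempotent
`e` (`(1 - e) T (e x)` has norm `≤ |1 - e| ξ |e| ‖x‖ = 0`), hence, being `K`-linear, with
simple functions, and then with every `η ∈ L⁰`: approximating `η` a.e. by simple `sₙ`, the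
defect `T(ηx) - ηTx` has norm at most `|η - sₙ| (ξ‖x‖ + ‖Tx‖) → 0`.

Conversely, continuity at `0` makes `F = {‖Tx‖ : ‖x‖ ≤ 1}` bounded in probability, and gluing
`x` and `y` along `{‖Ty‖ ≤ ‖Tx‖}` shows that `F` is upward directed. A directed family in `L⁰`
that is bounded in probability is bounded above: maximising the finite, strictly monotone
functional `h ↦ ∫ squash ∘ h` along an increasing sequence in `F` yields an a.e. finite
supremum that dominates every member of `F`. A bound `ξ` of `F` gives `‖Tx‖ ≤ ξ (‖x‖ + δ)`
by rescaling `x`, and `δ → 0`.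
-/

open Topology
open scoped ENNReal

namespace MeasureTheory.AEEqFun

variable {α β : Type*} [MeasurableSpace α] {μ : Measure α} [TopologicalSpace β]

instance [AddCommMonoid β] [PartialOrder β] [IsOrderedAddMonoid β] [ContinuousAdd β] :
    IsOrderedAddMonoid (α →ₘ[μ] β) where
  add_le_add_left f g hfg h := by
    rw [← coeFn_le] at hfg ⊢
    filter_upwards [hfg, coeFn_add f h, coeFn_add g h] with ω hω hf hg
    simpa only [hf, hg, Pi.add_apply] using add_le_add_left hω _

instance [MulZeroClass β] [PartialOrder β] [PosMulMono β] [ContinuousMul β] :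
    PosMulMono (α →ₘ[μ] β) where
  mul_le_mul_of_nonneg_left f hf g h hgh := by
    rw [← coeFn_le] at hf hgh ⊢
    filter_upwards [hf, hgh, coeFn_mul f g, coeFn_mul f h, coeFn_zero (β := β) (μ := μ)]
      with ω hf hgh hg hh h0
    rw [h0] at hf
    simp only [hg, hh, Pi.mul_apply]
    exact mul_le_mul_of_nonneg_left hgh hf

instance [Zero β] [One β] [Preorder β] [ZeroLEOneClass β] : ZeroLEOneClass (α →ₘ[μ] β) where
  zero_le_one := by
    rw [← coeFn_le]
    filter_upwards [coeFn_zero (β := β) (μ := μ), coeFn_one (β := β) (μ := μ)] with ω h₀ h₁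
    simp [h₀, h₁]

end MeasureTheory.AEEqFun

namespace RNTheory

variable {Ω : Type*} [MeasurableSpace Ω] {μ : Measure Ω}

section Measure

lemma measureReal_add_measureReal_sub_one_le [IsProbabilityMeasure μ] (s : Set Ω) {t : Set Ω}
    (ht : MeasurableSet t) : μ.real s + μ.real t - 1 ≤ μ.real (s ∩ t) := by
  have h := measureReal_union_add_inter (μ := μ) (s := s) ht
  have h₁ : μ.real (s ∪ t) ≤ 1 := measureReal_le_one
  linarith

lemma exists_lt_measureReal_of_monotone [IsFiniteMeasure μ] {s : ℕ → Set Ω} (hs : Monotone s)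
    {a : ℝ} (ha : a < μ.real (⋃ n, s n)) : ∃ n, a < μ.real (s n) :=
  (((ENNReal.tendsto_toReal (measure_ne_top μ _)).comp
    (tendsto_measure_iUnion_atTop hs)).eventually (lt_mem_nhds ha)).exists

lemma measureReal_le_of_ae_imp [IsFiniteMeasure μ] {s t : Set Ω} (h : ∀ᵐ ω ∂μ, ω ∈ s → ω ∈ t) :
    μ.real s ≤ μ.real t :=
  ENNReal.toReal_mono (measure_ne_top μ _) (measure_mono_ae h)

def squash (t : ℝ≥0∞) : ℝ≥0∞ := (1 + t⁻¹)⁻¹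

lemma squash_strictMono : StrictMono squash := fun _ _ hst =>
  ENNReal.inv_lt_inv.2 (ENNReal.add_lt_add_left ENNReal.one_ne_top (ENNReal.inv_lt_inv.2 hst))

lemma squash_le_one (t : ℝ≥0∞) : squash t ≤ 1 :=
  ENNReal.inv_le_one.2 le_self_add

lemma continuous_squash : Continuous squash :=
  continuous_inv.comp ((continuous_const_add 1).comp continuous_inv)

lemma squash_iSup {ι : Sort*} (f : ι → ℝ≥0∞) : squash (⨆ i, f i) = ⨆ i, squash (f i) :=
  squash_strictMono.monotone.map_iSup_of_continuousAt continuous_squash.continuousAt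
    (by simp [squash])

lemma lintegral_squash_iSup {g : ℕ → Ω → ℝ≥0∞} (hg : ∀ n, Measurable (g n))
    (hmono : Monotone g) :
    ∫⁻ ω, squash (⨆ n, g n ω) ∂μ = ⨆ n, ∫⁻ ω, squash (g n ω) ∂μ := by
  simp_rw [squash_iSup]
  exact lintegral_iSup (fun n => continuous_squash.measurable.comp (hg n))
    fun m n hmn ω => squash_strictMono.monotone (hmono hmn ω)

lemma lintegral_squash_ne_top [IsFiniteMeasure μ] (h : Ω → ℝ≥0∞) :
    ∫⁻ ω, squash (h ω) ∂μ ≠ ∞ :=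
  ne_top_of_le_ne_top (measure_ne_top μ univ)
    ((lintegral_mono fun ω => squash_le_one (h ω)).trans_eq lintegral_one)

lemma ae_le_of_lintegral_squash_sup_le [IsFiniteMeasure μ] {f G : Ω → ℝ≥0∞}
    (hf : Measurable f) (hG : Measurable G)
    (h : ∫⁻ ω, squash ((f ⊔ G) ω) ∂μ ≤ ∫⁻ ω, squash (G ω) ∂μ) : f ≤ᵐ[μ] G := by
  have heq := ae_eq_of_ae_le_of_lintegral_le (f := fun ω => squash (G ω))
    (g := fun ω => squash ((f ⊔ G) ω))
    (.of_forall fun ω => squash_strictMono.monotone le_sup_right) (lintegral_squash_ne_top G)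
    (continuous_squash.measurable.comp (hf.sup hG)).aemeasurable h
  filter_upwards [heq] with ω hω
  exact (le_sup_left : f ω ≤ (f ⊔ G) ω).trans (squash_strictMono.injective hω).ge

lemma exists_seq_iSup_eq {α ι : Type*} [CompleteLinearOrder α] [TopologicalSpace α]
    [OrderTopology α] [FirstCountableTopology α] [Nonempty ι] (f : ι → α) :
    ∃ a : ℕ → ι, ⨆ n, f (a n) = ⨆ i, f i := by
  obtain ⟨u, hu_mono, hu_tendsto, hu_mem⟩ :=
    exists_seq_tendsto_sSup (Set.range_nonempty f) (OrderTop.bddAbove _)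
  choose a ha using hu_mem
  refine ⟨a, ?_⟩
  simp_rw [ha]
  rw [iSup_eq_of_tendsto hu_mono hu_tendsto, sSup_range]

lemma exists_sup_ae_le_of_directed {ι : Type*} {F : ι → Ω → ℝ≥0∞}
    (hdir : ∀ i j, ∃ k, F i ≤ᵐ[μ] F k ∧ F j ≤ᵐ[μ] F k) {h h' : Ω → ℝ≥0∞}
    (hh : ∃ i, h ≤ᵐ[μ] F i) (hh' : ∃ j, h' ≤ᵐ[μ] F j) : ∃ k, h ⊔ h' ≤ᵐ[μ] F k := by
  obtain ⟨i, hi⟩ := hh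
  obtain ⟨j, hj⟩ := hh'
  obtain ⟨k, hik, hjk⟩ := hdir i j
  exact ⟨k, (hi.trans hik).sup_le (hj.trans hjk)⟩

theorem exists_monotone_ae_le_iSup [IsFiniteMeasure μ] {ι : Type*} [Nonempty ι]
    {F : ι → Ω → ℝ≥0∞} (hF : ∀ i, Measurable (F i))
    (hdir : ∀ i j, ∃ k, F i ≤ᵐ[μ] F k ∧ F j ≤ᵐ[μ] F k) :
    ∃ g : ℕ → Ω → ℝ≥0∞, Monotone g ∧ (∀ n, Measurable (g n)) ∧ (∀ n, ∃ i, g n ≤ᵐ[μ] F i) ∧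
      ∀ i, F i ≤ᵐ[μ] ⨆ n, g n := by
  set Φ : (Ω → ℝ≥0∞) → ℝ≥0∞ := fun h => ∫⁻ ω, squash (h ω) ∂μ
  have hΦ_mono {h h' : Ω → ℝ≥0∞} (hle : h ≤ᵐ[μ] h') : Φ h ≤ Φ h' :=
    lintegral_mono_ae (hle.mono fun _ hω => squash_strictMono.monotone hω)
  have hΦ_le {h : Ω → ℝ≥0∞} : (∃ i, h ≤ᵐ[μ] F i) → Φ h ≤ ⨆ i, Φ (F i) := fun ⟨i, hi⟩ =>
    (hΦ_mono hi).trans (le_iSup (fun i => Φ (F i)) i)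
  obtain ⟨a, ha⟩ := exists_seq_iSup_eq fun i => Φ (F i)
  set g := partialSups fun n => F (a n)
  have hg_meas (n : ℕ) : Measurable (g n) := by
    induction n with
    | zero => simpa [g] using hF (a 0)
    | succ n ih => simpa [g, partialSups_succ] using ih.sup (hF (a (n + 1)))
  have hg_dom (n : ℕ) : ∃ i, g n ≤ᵐ[μ] F i := by
    induction n with
    | zero => exact ⟨a 0, by simp only [g, partialSups_zero]; exact .rfl⟩
    | succ n ih =>
      simpa [g, partialSups_succ] using exists_sup_ae_le_of_directed hdir ih ⟨a (n + 1), .rfl⟩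
  have hΦ_g : Φ (⨆ n, g n) = ⨆ i, Φ (F i) := by
    have h := lintegral_squash_iSup (μ := μ) hg_meas g.monotone
    simp only [← iSup_apply] at h
    refine h.trans (le_antisymm (iSup_le fun n => hΦ_le (hg_dom n)) ?_)
    rw [← ha]
    exact iSup_mono fun n => hΦ_mono (.of_forall fun ω => le_partialSups (fun n => F (a n)) n ω)
  have hG_meas : Measurable (⨆ n, g n) := by
    simpa only [← iSup_apply] using Measurable.iSup hg_meas
  refine ⟨g, g.monotone, hg_meas, hg_dom, fun i =>
    ae_le_of_lintegral_squash_sup_le (hF i) hG_meas ?_⟩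
  have h := lintegral_squash_iSup (μ := μ) (fun n => (hF i).sup (hg_meas n))
    fun m n hmn => sup_le_sup_left (g.monotone hmn) (F i)
  simp only [← iSup_apply, ← sup_iSup] at h
  calc Φ (F i ⊔ ⨆ n, g n) = ⨆ n, Φ (F i ⊔ g n) := h
    _ ≤ ⨆ i, Φ (F i) :=
        iSup_le fun n => hΦ_le (exists_sup_ae_le_of_directed hdir ⟨i, .rfl⟩ (hg_dom n))
    _ = Φ (⨆ n, g n) := hΦ_g.symm

def IsBoundedInProbability (F : Set (Ω →ₘ[μ] ℝ)) : Prop :=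
  ∀ δ > 0, ∃ c : ℝ, ∀ f ∈ F, μ.real {ω | c ≤ f ω} ≤ δ

theorem IsBoundedInProbability.bddAbove_of_directedOn [IsFiniteMeasure μ]
    {F : Set (Ω →ₘ[μ] ℝ)} (htight : IsBoundedInProbability F) (hdir : DirectedOn (· ≤ ·) F) :
    BddAbove F := by
  rcases F.eq_empty_or_nonempty with rfl | hne
  · exact bddAbove_empty
  have := hne.to_subtype
  obtain ⟨g, hg_mono, hg_meas, hg_dom, hg_ub⟩ := exists_monotone_ae_le_iSup (μ := μ)
    (F := fun f : F => fun ω => ENNReal.ofReal (f.1 ω)) (fun f => f.1.measurable.ennreal_ofReal)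
    (by
      rintro ⟨f, hf⟩ ⟨f', hf'⟩
      obtain ⟨k, hk, hfk, hf'k⟩ := hdir f hf f' hf'
      exact ⟨⟨k, hk⟩, (AEEqFun.coeFn_le.2 hfk).mono fun _ h => ENNReal.ofReal_le_ofReal h,
        (AEEqFun.coeFn_le.2 hf'k).mono fun _ h => ENNReal.ofReal_le_ofReal h⟩)
  have hG_meas : Measurable (⨆ n, g n) := by
    simpa only [← iSup_apply] using Measurable.iSup hg_meas
  have hG_small (δ : ℝ) (hδ : 0 < δ) : μ {ω | (⨆ n, g n) ω = ∞} ≤ ENNReal.ofReal δ := by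
    obtain ⟨c, hc⟩ := htight δ hδ
    calc μ {ω | (⨆ n, g n) ω = ∞} ≤ μ (⋃ n, {ω | ENNReal.ofReal c < g n ω}) := by
          refine measure_mono fun ω hω => Set.mem_iUnion.2 ?_
          replace hω : ⨆ n, g n ω = ∞ := by simpa using hω
          exact lt_iSup_iff.1 (hω ▸ ENNReal.ofReal_lt_top)
      _ = ⨆ n, μ {ω | ENNReal.ofReal c < g n ω} :=
          Monotone.measure_iUnion fun m n hmn ω hω => hω.trans_le (hg_mono hmn ω)
      _ ≤ ENNReal.ofReal δ := by
          refine iSup_le fun n => ?_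
          obtain ⟨⟨f, hf⟩, hgf⟩ := hg_dom n
          calc μ {ω | ENNReal.ofReal c < g n ω} ≤ μ {ω | c ≤ f ω} :=
                measure_mono_ae <| hgf.mono fun ω hω h =>
                  (ENNReal.ofReal_lt_ofReal_iff'.1 (lt_of_lt_of_le h hω)).1.le
            _ = ENNReal.ofReal (μ.real {ω | c ≤ f ω}) := (ofReal_measureReal).symm
            _ ≤ ENNReal.ofReal δ := ENNReal.ofReal_le_ofReal (hc f hf)
  have hG_fin : ∀ᵐ ω ∂μ, (⨆ n, g n) ω ≠ ∞ := by
    have h : μ {ω | (⨆ n, g n) ω = ∞} = 0 :=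
      le_zero_iff.1 <| ENNReal.le_of_forall_pos_le_add fun δ hδ _ => by
        simpa using hG_small δ hδ
    exact measure_eq_zero_iff_ae_notMem.1 h
  refine ⟨AEEqFun.mk (fun ω => ((⨆ n, g n) ω).toReal) hG_meas.ennreal_toReal.aestronglyMeasurable,
    fun f hf => ?_⟩
  rw [← AEEqFun.coeFn_le]
  filter_upwards [hg_ub ⟨f, hf⟩, hG_fin,
    AEEqFun.coeFn_mk (μ := μ) (fun ω => ((⨆ n, g n) ω).toReal) _] with ω hω hfin hξ
  rw [hξ]
  exact (ENNReal.ofReal_le_iff_le_toReal hfin).1 hω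

lemma le_mul_of_forall_le_mul_add_const {f g ξ : Ω →ₘ[μ] ℝ}
    (h : ∀ δ > 0, f ≤ ξ * (g + AEEqFun.const Ω δ)) : f ≤ ξ * g := by
  have hn (n : ℕ) : ∀ᵐ ω ∂μ, f ω ≤ ξ ω * (g ω + 1 / (n + 1)) := by
    filter_upwards [AEEqFun.coeFn_le.2 (h (1 / ((n : ℝ) + 1)) Nat.one_div_pos_of_nat),
      AEEqFun.coeFn_mul ξ (g + AEEqFun.const Ω (1 / ((n : ℝ) + 1))),
      AEEqFun.coeFn_add g (AEEqFun.const Ω (1 / ((n : ℝ) + 1))),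
      AEEqFun.coeFn_const Ω (1 / ((n : ℝ) + 1))] with ω hω hmul hadd hc
    rw [hmul, Pi.mul_apply, hadd, Pi.add_apply, hc, Function.const_apply] at hω
    exact hω
  rw [← AEEqFun.coeFn_le]
  filter_upwards [ae_all_iff.2 hn, AEEqFun.coeFn_mul ξ g] with ω hω hmul
  rw [hmul, Pi.mul_apply]
  have hlim := (tendsto_one_div_add_atTop_nhds_zero_nat.const_add (g ω)).const_mul (ξ ω)
  rw [add_zero] at hlim
  exact ge_of_tendsto' hlim hω

end Measure

section Scalars

def l0indicator (K : Type*) [RCLike K] (μ : Measure Ω) {A : Set Ω} (hA : MeasurableSet A) :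
    Ω →ₘ[μ] K :=
  AEEqFun.mk (A.indicator 1) (stronglyMeasurable_one.indicator hA).aestronglyMeasurable

variable {K : Type*} [RCLike K]

lemma coeFn_l0abs (ξ : Ω →ₘ[μ] K) : l0abs ξ =ᵐ[μ] fun ω => ‖ξ ω‖ :=
  AEEqFun.coeFn_comp _ _ _

lemma l0abs_nonneg (ξ : Ω →ₘ[μ] K) : 0 ≤ l0abs ξ := by
  rw [← AEEqFun.coeFn_le]
  filter_upwards [coeFn_l0abs ξ, AEEqFun.coeFn_zero (β := ℝ) (μ := μ)] with ω h h0
  simp [h, h0]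

lemma l0abs_mul (ξ η : Ω →ₘ[μ] K) : l0abs (ξ * η) = l0abs ξ * l0abs η := by
  apply AEEqFun.ext
  filter_upwards [coeFn_l0abs (ξ * η), coeFn_l0abs ξ, coeFn_l0abs η, AEEqFun.coeFn_mul ξ η,
    AEEqFun.coeFn_mul (l0abs ξ) (l0abs η)] with ω h h₁ h₂ hm hm'
  simp [h, h₁, h₂, hm, hm']

lemma l0abs_zero : l0abs (0 : Ω →ₘ[μ] K) = 0 := by
  apply AEEqFun.ext
  filter_upwards [coeFn_l0abs (0 : Ω →ₘ[μ] K), AEEqFun.coeFn_zero (β := K) (μ := μ),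
    AEEqFun.coeFn_zero (β := ℝ) (μ := μ)] with ω h h₀ h₀'
  simp [h, h₀, h₀']

lemma l0abs_neg (ξ : Ω →ₘ[μ] K) : l0abs (-ξ) = l0abs ξ := by
  apply AEEqFun.ext
  filter_upwards [coeFn_l0abs (-ξ), coeFn_l0abs ξ, AEEqFun.coeFn_neg ξ] with ω h h' hn
  simp [h, h', hn]

lemma l0abs_rconst (t : ℝ) : l0abs (rconst K μ t) = AEEqFun.const Ω |t| := by
  apply AEEqFun.ext
  filter_upwards [coeFn_l0abs (rconst K μ t), AEEqFun.coeFn_const Ω ((t : K)),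
    AEEqFun.coeFn_const Ω |t|] with ω h hc hc'
  rw [h, hc', show rconst K μ t = AEEqFun.const Ω (t : K) from rfl, hc]
  simp

lemma coeFn_l0indicator {A : Set Ω} (hA : MeasurableSet A) :
    l0indicator K μ hA =ᵐ[μ] A.indicator 1 :=
  AEEqFun.coeFn_mk _ _

lemma isIdempotentElem_l0indicator {A : Set Ω} (hA : MeasurableSet A) :
    IsIdempotentElem (l0indicator K μ hA) := by
  apply AEEqFun.ext
  filter_upwards [AEEqFun.coeFn_mul (l0indicator K μ hA) (l0indicator K μ hA),
    coeFn_l0indicator (K := K) (μ := μ) hA] with ω hm h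
  by_cases hω : ω ∈ A <;> simp [hm, h, hω]

lemma l0abs_add_l0abs_one_sub {e : Ω →ₘ[μ] K} (he : IsIdempotentElem e) :
    l0abs e + l0abs (1 - e) = 1 := by
  have he' : ∀ᵐ ω ∂μ, IsIdempotentElem (e ω) := by
    filter_upwards [AEEqFun.coeFn_mul e e, AEEqFun.ext_iff.1 he] with ω hm h
    rw [hm] at h
    exact h
  apply AEEqFun.ext
  filter_upwards [he', AEEqFun.coeFn_add (l0abs e) (l0abs (1 - e)), coeFn_l0abs e,
    coeFn_l0abs (1 - e), AEEqFun.coeFn_sub 1 e, AEEqFun.coeFn_one (β := K) (μ := μ),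
    AEEqFun.coeFn_one (β := ℝ) (μ := μ)] with ω hω ha h₁ h₂ hs ho ho'
  rcases IsIdempotentElem.iff_eq_zero_or_one.1 hω with h | h <;>
    simp [ha, h₁, h₂, hs, ho, ho', h]

lemma l0abs_l0indicator_mul_add_eq_sup (f g : Ω →ₘ[μ] ℝ) :
    l0abs (l0indicator K μ (measurableSet_le g.measurable f.measurable)) * f
      + l0abs (1 - l0indicator K μ (measurableSet_le g.measurable f.measurable)) * g = f ⊔ g := by
  have he := coeFn_l0indicator (K := K) (μ := μ) (measurableSet_le g.measurable f.measurable)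
  set e := l0indicator K μ (measurableSet_le g.measurable f.measurable)
  apply AEEqFun.ext
  filter_upwards [AEEqFun.coeFn_add (l0abs e * f) (l0abs (1 - e) * g),
    AEEqFun.coeFn_mul (l0abs e) f, AEEqFun.coeFn_mul (l0abs (1 - e)) g, coeFn_l0abs e,
    coeFn_l0abs (1 - e), AEEqFun.coeFn_sub 1 e, AEEqFun.coeFn_one (β := K) (μ := μ),
    he, AEEqFun.coeFn_sup f g]
    with ω ha h₁ h₂ h₃ h₄ hs ho he hsup
  rw [ha, hsup]
  by_cases hω : g ω ≤ f ω
  · simp [h₁, h₂, h₃, h₄, hs, ho, he, hω]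
  · simp [h₁, h₂, h₃, h₄, hs, ho, he, hω, (not_le.1 hω).le]

lemma exists_l0abs_mul_eq_one {f : Ω →ₘ[μ] ℝ} {δ : ℝ} (hδ : 0 < δ)
    (hf : AEEqFun.const Ω δ ≤ f) : ∃ χ : Ω →ₘ[μ] K, l0abs χ * f = 1 := by
  have hcont : Continuous fun r : ℝ => (max r δ)⁻¹ :=
    (continuous_id.max continuous_const).inv₀ fun r => (lt_max_of_lt_right hδ).ne'
  set g := f.comp _ hcont
  have hg : l0ofReal K g =ᵐ[μ] fun ω => (g ω : K) := AEEqFun.coeFn_comp _ _ _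
  refine ⟨l0ofReal K g, AEEqFun.ext ?_⟩
  filter_upwards [coeFn_l0abs (l0ofReal K g), hg, AEEqFun.coeFn_comp _ hcont f,
    AEEqFun.coeFn_mul (l0abs (l0ofReal K g)) f, AEEqFun.coeFn_le.2 hf, AEEqFun.coeFn_const Ω δ,
    AEEqFun.coeFn_one (β := ℝ) (μ := μ)] with ω habs hre hinv hmul hle hc hone
  rw [hc, Function.const_apply] at hle
  have hfω : 0 < f ω := hδ.trans_le hle
  rw [hmul, Pi.mul_apply, habs, hre, hinv, hone, Pi.one_apply, Function.comp_apply,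
    RCLike.norm_ofReal, max_eq_left hle, abs_inv, abs_of_pos hfω]
  exact inv_mul_cancel₀ hfω.ne'

end Scalars

section Topology

variable [IsProbabilityMeasure μ] {S : Type*} [AddCommGroup S] {nrm : S → Ω →ₘ[μ] ℝ}

lemma mem_Nset_of_ae {x₀ y : S} {ε lam : ℝ} (hlam : 0 < lam)
    (h : ∀ᵐ ω ∂μ, nrm (y - x₀) ω < ε) : y ∈ Nset nrm x₀ ε lam := by
  have hfull : μ.real {ω | nrm (y - x₀) ω < ε} = 1 := by
    rw [← probReal_univ (μ := μ)]
    exact measureReal_congr (eventuallyEq_set.2 (h.mono fun ω hω => iff_of_true hω trivial))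
  show 1 - lam < μ.real _
  linarith

theorem isOpen_Nset (hadd : ∀ x y, nrm (x + y) ≤ nrm x + nrm y) (x₀ : S) (ε lam : ℝ) :
    IsOpen[elTop nrm] (Nset nrm x₀ ε lam) := by
  intro y₀ hy₀
  set f := nrm (y₀ - x₀)
  have hunion : (⋃ n : ℕ, {ω | f ω < ε - 1 / (n + 1)}) = {ω | f ω < ε} := by
    ext ω
    simp only [Set.mem_iUnion, Set.mem_ofPred_eq]
    constructor
    · rintro ⟨n, hn⟩
      exact hn.trans (sub_lt_self ε Nat.one_div_pos_of_nat)
    · intro hω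
      obtain ⟨n, hn⟩ := exists_nat_one_div_lt (sub_pos.2 hω)
      exact ⟨n, by linarith⟩
  obtain ⟨n, hn⟩ := exists_lt_measureReal_of_monotone (μ := μ)
    (s := fun n : ℕ => {ω | f ω < ε - 1 / (n + 1)})
    (fun m n hmn ω (hω : f ω < _) => hω.trans_le (sub_le_sub_left (Nat.one_div_le_one_div hmn) ε))
    (a := 1 - lam) (hunion ▸ hy₀)
  set η : ℝ := 1 / (n + 1)
  set slack := μ.real {ω | f ω < ε - η} - (1 - lam)
  refine ⟨η, Nat.one_div_pos_of_nat, min slack (1 / 2), lt_min (by linarith) (by norm_num),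
    (min_le_right _ _).trans_lt (by norm_num), fun y hy => ?_⟩
  have htri := hadd (y - y₀) (y₀ - x₀)
  rw [sub_add_sub_cancel] at htri
  change nrm (y - x₀) ≤ nrm (y - y₀) + f at htri
  have hincl : ∀ᵐ ω ∂μ, ω ∈ {ω | nrm (y - y₀) ω < η} ∩ {ω | f ω < ε - η} →
      ω ∈ {ω | nrm (y - x₀) ω < ε} := by
    filter_upwards [AEEqFun.coeFn_le.2 htri, AEEqFun.coeFn_add (nrm (y - y₀)) f]
      with ω hω hsum ⟨h₁, h₂⟩
    simp only [Set.mem_ofPred_eq, hsum, Pi.add_apply] at hω h₁ h₂ ⊢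
    linarith
  have hy' : 1 - min slack (1 / 2) < μ.real {ω | nrm (y - y₀) ω < η} := hy
  have hmeas : MeasurableSet {ω | f ω < ε - η} := measurableSet_lt f.measurable measurable_const
  show 1 - lam < μ.real _
  linarith [measureReal_add_measureReal_sub_one_le (μ := μ) {ω | nrm (y - y₀) ω < η} hmeas,
    measureReal_le_of_ae_imp hincl, min_le_left slack (1 / 2)]

theorem continuous_of_le_mul {S' : Type*} [AddCommGroup S'] {nrm' : S' → Ω →ₘ[μ] ℝ}
    (hnonneg : ∀ x, 0 ≤ nrm x) (T : S →+ S') {ξ : Ω →ₘ[μ] ℝ}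
    (hT : ∀ x, nrm' (T x) ≤ ξ * nrm x) : Continuous[elTop nrm, elTop nrm'] T := by
  rw [continuous_def]
  intro U hU x₀ hx₀
  obtain ⟨ε, hε, lam, hlam, hlam₁, hsub⟩ := hU (T x₀) hx₀
  have hunion : (⋃ n : ℕ, {ω | ξ ω < n}) = univ :=
    Set.eq_univ_of_forall fun ω => Set.mem_iUnion.2 (exists_nat_gt (ξ ω))
  obtain ⟨n, hn⟩ := exists_lt_measureReal_of_monotone (μ := μ) (s := fun n : ℕ => {ω | ξ ω < n})
    (fun m n hmn ω (hω : ξ ω < m) => hω.trans_le (Nat.cast_le.2 hmn)) (a := 1 - lam / 2)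
    (by rw [hunion, probReal_univ]; linarith)
  have hM : (0 : ℝ) < n + 1 := by positivity
  refine ⟨ε / (n + 1), by positivity, lam / 2, by linarith, by linarith, fun y hy => hsub ?_⟩
  have hincl : ∀ᵐ ω ∂μ, ω ∈ {ω | nrm (y - x₀) ω < ε / (n + 1)} ∩ {ω | ξ ω < n} →
      ω ∈ {ω | nrm' (T y - T x₀) ω < ε} := by
    filter_upwards [AEEqFun.coeFn_le.2 (hT (y - x₀)), AEEqFun.coeFn_mul ξ (nrm (y - x₀)),
      AEEqFun.coeFn_le.2 (hnonneg (y - x₀)), AEEqFun.coeFn_zero (β := ℝ) (μ := μ)]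
      with ω hω hmul h₀ hz ⟨h₁, h₂⟩
    simp only [Set.mem_ofPred_eq, hmul, hz, Pi.mul_apply, Pi.zero_apply, map_sub] at hω h₀ h₁ h₂ ⊢
    calc nrm' (T y - T x₀) ω ≤ ξ ω * nrm (y - x₀) ω := hω
      _ ≤ (n + 1) * nrm (y - x₀) ω := mul_le_mul_of_nonneg_right (by linarith) h₀
      _ < (n + 1) * (ε / (n + 1)) := mul_lt_mul_of_pos_left h₁ hM
      _ = ε := mul_div_cancel₀ ε hM.ne'
  have hy' : 1 - lam / 2 < μ.real {ω | nrm (y - x₀) ω < ε / (n + 1)} := hy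
  show 1 - lam < μ.real _
  linarith [measureReal_add_measureReal_sub_one_le (μ := μ) {ω | nrm (y - x₀) ω < ε / (n + 1)}
    (measurableSet_lt ξ.measurable (measurable_const (a := (n : ℝ)))),
    measureReal_le_of_ae_imp hincl]

end Topology

section RNNorm

variable {K : Type*} [RCLike K] {S : Type*} [AddCommGroup S] [Module (Ω →ₘ[μ] K) S]
  {nrm : S → Ω →ₘ[μ] ℝ}

lemma IsRNNorm.map_zero (h : IsRNNorm K nrm) : nrm 0 = 0 := by
  simpa [l0abs_zero] using h.smul_eq 0 0

lemma IsRNNorm.map_smul_add_one_sub_smul (h : IsRNNorm K nrm) {e : Ω →ₘ[μ] K}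
    (he : IsIdempotentElem e) (u v : S) :
    nrm (e • u + (1 - e) • v) = l0abs e * nrm u + l0abs (1 - e) * nrm v := by
  set w := e • u + (1 - e) • v
  have hew : e • w = e • u := by
    rw [smul_add, smul_smul, smul_smul, he.eq, he.mul_one_sub_self,
      zero_smul (Ω →ₘ[μ] K) v, add_zero]
  have hew' : (1 - e) • w = (1 - e) • v := by
    rw [smul_add, smul_smul, smul_smul, he.one_sub.eq, he.one_sub_mul_self,
      zero_smul (Ω →ₘ[μ] K) u, zero_add]
  calc nrm w = (l0abs e + l0abs (1 - e)) * nrm w := by rw [l0abs_add_l0abs_one_sub he, one_mul]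
    _ = nrm (e • w) + nrm ((1 - e) • w) := by rw [add_mul, h.smul_eq, h.smul_eq]
    _ = l0abs e * nrm u + l0abs (1 - e) * nrm v := by rw [hew, hew', h.smul_eq, h.smul_eq]

lemma IsRNNorm.coeFn_rconst_smul (h : IsRNNorm K nrm) (t : ℝ) (x : S) :
    nrm (rconst K μ t • x) =ᵐ[μ] fun ω => |t| * nrm x ω := by
  rw [h.smul_eq, l0abs_rconst]
  filter_upwards [AEEqFun.coeFn_mul (AEEqFun.const Ω |t|) (nrm x), AEEqFun.coeFn_const Ω |t|]
    with ω hmul hc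
  simp [hmul, hc]

lemma IsRNNorm.eq_zero_of_forall_le_l0abs_mul (h : IsRNNorm K nrm) {w : S}
    {a : ℕ → Ω →ₘ[μ] K} (ha : ∀ᵐ ω ∂μ, Tendsto (fun n => a n ω) atTop (𝓝 0))
    {C : Ω →ₘ[μ] ℝ} (hw : ∀ n, nrm w ≤ l0abs (a n) * C) : w = 0 := by
  refine h.definite w (le_antisymm ?_ (h.nonneg w))
  have hn (n : ℕ) : ∀ᵐ ω ∂μ, nrm w ω ≤ ‖a n ω‖ * C ω := by
    filter_upwards [AEEqFun.coeFn_le.2 (hw n), AEEqFun.coeFn_mul (l0abs (a n)) C,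
      coeFn_l0abs (a n)] with ω hω hmul habs
    rwa [hmul, Pi.mul_apply, habs] at hω
  rw [← AEEqFun.coeFn_le]
  filter_upwards [ae_all_iff.2 hn, ha, AEEqFun.coeFn_zero (β := ℝ) (μ := μ)] with ω hω hlim h₀
  have hlim' := (hlim.norm.mul_const (C ω))
  rw [norm_zero, zero_mul] at hlim'
  rw [h₀, Pi.zero_apply]
  exact ge_of_tendsto' hlim' hω

end RNNorm

section Operator

variable {K : Type*} [RCLike K] {S₁ S₂ : Type*} [AddCommGroup S₁] [Module (Ω →ₘ[μ] K) S₁]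
  [AddCommGroup S₂] [Module (Ω →ₘ[μ] K) S₂] {nrm₁ : S₁ → Ω →ₘ[μ] ℝ} {nrm₂ : S₂ → Ω →ₘ[μ] ℝ}

lemma map_smul_of_isIdempotentElem (h₁ : IsRNNorm K nrm₁) (h₂ : IsRNNorm K nrm₂) (T : S₁ →+ S₂)
    {ξ : Ω →ₘ[μ] ℝ} (hT : ∀ x, nrm₂ (T x) ≤ ξ * nrm₁ x) {e : Ω →ₘ[μ] K}
    (he : IsIdempotentElem e) (x : S₁) : T (e • x) = e • T x := by
  have hkill {e : Ω →ₘ[μ] K} (he : IsIdempotentElem e) (z : S₁) : (1 - e) • T (e • z) = 0 := by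
    refine h₂.definite _ (le_antisymm ?_ (h₂.nonneg _))
    calc nrm₂ ((1 - e) • T (e • z)) = l0abs (1 - e) * nrm₂ (T (e • z)) := h₂.smul_eq _ _
      _ ≤ l0abs (1 - e) * (ξ * (l0abs e * nrm₁ z)) :=
          mul_le_mul_of_nonneg_left (h₁.smul_eq e z ▸ hT _) (l0abs_nonneg _)
      _ = l0abs ((1 - e) * e) * (ξ * nrm₁ z) := by rw [l0abs_mul]; ring
      _ = 0 := by rw [he.one_sub_mul_self, l0abs_zero, zero_mul]
  have hon : T (e • x) = e • T (e • x) := by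
    simpa [sub_smul, sub_eq_zero] using hkill he x
  have hoff : e • T ((1 - e) • x) = 0 := by
    simpa using hkill he.one_sub x
  calc T (e • x) = e • T (e • x) + e • T ((1 - e) • x) := by rw [hoff, add_zero, ← hon]
    _ = e • T x := by rw [← smul_add, ← map_add, ← add_smul, add_sub_cancel, one_smul]

lemma map_mk_simpleFunc_smul (h₁ : IsRNNorm K nrm₁) (h₂ : IsRNNorm K nrm₂) (T : S₁ →+ S₂)
    (hconst : ∀ (c : K) x, T ((AEEqFun.const Ω c : Ω →ₘ[μ] K) • x)
      = (AEEqFun.const Ω c : Ω →ₘ[μ] K) • T x)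
    {ξ : Ω →ₘ[μ] ℝ} (hT : ∀ x, nrm₂ (T x) ≤ ξ * nrm₁ x) (s : SimpleFunc Ω K) (x : S₁) :
    T ((AEEqFun.mk s s.aestronglyMeasurable : Ω →ₘ[μ] K) • x)
      = (AEEqFun.mk s s.aestronglyMeasurable : Ω →ₘ[μ] K) • T x := by
  induction s using SimpleFunc.induction with
  | @const c A hA =>
    have hmk : AEEqFun.mk (SimpleFunc.piecewise A hA (.const Ω c) (.const Ω 0))
        (SimpleFunc.aestronglyMeasurable _) = AEEqFun.const Ω c * l0indicator K μ hA := by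
      apply AEEqFun.ext
      filter_upwards [AEEqFun.coeFn_mk _ (SimpleFunc.aestronglyMeasurable (μ := μ)
          (SimpleFunc.piecewise A hA (.const Ω c) (.const Ω 0))),
        AEEqFun.coeFn_mul (AEEqFun.const Ω c) (l0indicator K μ hA), AEEqFun.coeFn_const Ω c,
        coeFn_l0indicator (K := K) (μ := μ) hA] with ω hmk hmul hc hind
      rw [hmk, hmul, Pi.mul_apply, hc, hind]
      by_cases hω : ω ∈ A <;> simp [hω]
    rw [hmk, mul_smul, hconst,
      map_smul_of_isIdempotentElem h₁ h₂ T hT (isIdempotentElem_l0indicator hA), ← mul_smul]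
  | @add f g _ hf hg =>
    have hmk : AEEqFun.mk (f + g) (f + g).aestronglyMeasurable
        = AEEqFun.mk f (f.aestronglyMeasurable (μ := μ)) + AEEqFun.mk g g.aestronglyMeasurable := by
      rw [AEEqFun.mk_add_mk]
      rfl
    rw [hmk, add_smul, map_add, hf, hg, add_smul]

theorem map_smul_of_le_mul (h₁ : IsRNNorm K nrm₁) (h₂ : IsRNNorm K nrm₂) (T : S₁ →+ S₂)
    (hconst : ∀ (c : K) x, T ((AEEqFun.const Ω c : Ω →ₘ[μ] K) • x)
      = (AEEqFun.const Ω c : Ω →ₘ[μ] K) • T x)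
    {ξ : Ω →ₘ[μ] ℝ} (hT : ∀ x, nrm₂ (T x) ≤ ξ * nrm₁ x) (η : Ω →ₘ[μ] K) (x : S₁) :
    T (η • x) = η • T x := by
  set s : ℕ → SimpleFunc Ω K := SimpleFunc.approxOn η η.measurable univ 0 (mem_univ 0)
  set m : ℕ → Ω →ₘ[μ] K := fun n => AEEqFun.mk (s n) (s n).aestronglyMeasurable
  have hm (n : ℕ) : m n =ᵐ[μ] s n := AEEqFun.coeFn_mk _ _
  have hlim : ∀ᵐ ω ∂μ, Tendsto (fun n => (η - m n) ω) atTop (𝓝 0) := by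
    filter_upwards [ae_all_iff.2 fun n => AEEqFun.coeFn_sub η (m n), ae_all_iff.2 hm]
      with ω hsub hmk
    simp only [hsub, Pi.sub_apply, hmk]
    simpa using (tendsto_const_nhds (x := η ω)).sub
      (SimpleFunc.tendsto_approxOn η.measurable (mem_univ 0) (x := ω) (by simp))
  rw [← sub_eq_zero]
  refine h₂.eq_zero_of_forall_le_l0abs_mul hlim (C := ξ * nrm₁ x + nrm₂ (T x)) fun n => ?_
  have hdecomp : T (η • x) - η • T x = T ((η - m n) • x) + (-(η - m n)) • T x := by
    rw [neg_smul, sub_smul, map_sub, map_mk_simpleFunc_smul h₁ h₂ T hconst hT, sub_smul]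
    abel
  calc nrm₂ (T (η • x) - η • T x)
      ≤ nrm₂ (T ((η - m n) • x)) + nrm₂ ((-(η - m n)) • T x) := hdecomp ▸ h₂.add_le _ _
    _ ≤ ξ * (l0abs (η - m n) * nrm₁ x) + l0abs (η - m n) * nrm₂ (T x) := by
        rw [h₂.smul_eq, l0abs_neg, ← h₁.smul_eq]
        exact add_le_add_left (hT _) _
    _ = l0abs (η - m n) * (ξ * nrm₁ x + nrm₂ (T x)) := by ring

theorem isBoundedInProbability_image_of_continuous [IsProbabilityMeasure μ]
    (h₁ : IsRNNorm K nrm₁) (h₂ : IsRNNorm K nrm₂) (T : S₁ →ₗ[Ω →ₘ[μ] K] S₂)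
    (hT : Continuous[elTop nrm₁, elTop nrm₂] T) :
    IsBoundedInProbability ((fun x => nrm₂ (T x)) '' {x | nrm₁ x ≤ 1}) := by
  intro δ hδ
  have hU : IsOpen[elTop nrm₁] (T ⁻¹' Nset nrm₂ 0 1 δ) :=
    continuous_def.1 hT _ (isOpen_Nset h₂.add_le 0 1 δ)
  have h₀ : (0 : S₁) ∈ T ⁻¹' Nset nrm₂ 0 1 δ := by
    refine mem_Nset_of_ae hδ ?_
    filter_upwards [AEEqFun.coeFn_zero (β := ℝ) (μ := μ)] with ω hω
    simp [h₂.map_zero, hω]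
  obtain ⟨ε, hε, lam, hlam, -, hsub⟩ := hU 0 h₀
  refine ⟨2 / ε, ?_⟩
  rintro _ ⟨x, hx, rfl⟩
  have hmem : T (rconst K μ (ε / 2) • x) ∈ Nset nrm₂ 0 1 δ := by
    refine hsub (mem_Nset_of_ae hlam ?_)
    filter_upwards [h₁.coeFn_rconst_smul (ε / 2) x, AEEqFun.coeFn_le.2 hx,
      AEEqFun.coeFn_one (β := ℝ) (μ := μ)] with ω hω hx hone
    simp only [sub_zero, hω, hone, Pi.one_apply, abs_of_pos (half_pos hε)] at hx ⊢
    nlinarith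
  have hset : {ω | nrm₂ (T (rconst K μ (ε / 2) • x) - 0) ω < 1} =ᵐ[μ]
      {ω | nrm₂ (T x) ω < 2 / ε} := by
    rw [sub_zero, map_smul, Filter.eventuallyEq_set]
    filter_upwards [h₂.coeFn_rconst_smul (ε / 2) (T x)] with ω hω
    simp only [hω, abs_of_pos (half_pos hε), lt_div_iff₀ hε]
    constructor <;> intro h <;> linarith
  have hlt : 1 - δ < μ.real {ω | nrm₂ (T x) ω < 2 / ε} := measureReal_congr hset ▸ hmem
  have hcompl : {ω | 2 / ε ≤ nrm₂ (T x) ω} = {ω | nrm₂ (T x) ω < 2 / ε}ᶜ := by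
    ext ω
    simp
  rw [hcompl, probReal_compl_eq_one_sub (measurableSet_lt (nrm₂ (T x)).measurable measurable_const)]
  linarith

theorem directedOn_image_nrm (h₁ : IsRNNorm K nrm₁) (h₂ : IsRNNorm K nrm₂)
    (T : S₁ →ₗ[Ω →ₘ[μ] K] S₂) :
    DirectedOn (· ≤ ·) ((fun x => nrm₂ (T x)) '' {x | nrm₁ x ≤ 1}) := by
  rintro _ ⟨x, hx, rfl⟩ _ ⟨y, hy, rfl⟩
  set e := l0indicator K μ (measurableSet_le (nrm₂ (T y)).measurable (nrm₂ (T x)).measurable)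
  have he : IsIdempotentElem e := isIdempotentElem_l0indicator _
  refine ⟨nrm₂ (T (e • x + (1 - e) • y)), ⟨_, ?_, rfl⟩, ?_⟩
  · calc nrm₁ (e • x + (1 - e) • y) = l0abs e * nrm₁ x + l0abs (1 - e) * nrm₁ y :=
          h₁.map_smul_add_one_sub_smul he x y
      _ ≤ l0abs e * 1 + l0abs (1 - e) * 1 :=
          add_le_add (mul_le_mul_of_nonneg_left hx (l0abs_nonneg e))
            (mul_le_mul_of_nonneg_left hy (l0abs_nonneg (1 - e)))
      _ = 1 := by rw [mul_one, mul_one, l0abs_add_l0abs_one_sub he]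
  · rw [map_add, map_smul, map_smul, h₂.map_smul_add_one_sub_smul he,
      l0abs_l0indicator_mul_add_eq_sup]
    exact ⟨le_sup_left, le_sup_right⟩

theorem le_mul_of_forall_nrm_le_one (h₁ : IsRNNorm K nrm₁) (h₂ : IsRNNorm K nrm₂)
    (T : S₁ →ₗ[Ω →ₘ[μ] K] S₂) {ξ : Ω →ₘ[μ] ℝ} (hξ : ∀ x, nrm₁ x ≤ 1 → nrm₂ (T x) ≤ ξ)
    (x : S₁) : nrm₂ (T x) ≤ ξ * nrm₁ x := by
  refine le_mul_of_forall_le_mul_add_const fun δ hδ => ?_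
  have hδ₀ : (0 : Ω →ₘ[μ] ℝ) ≤ AEEqFun.const Ω δ := by
    rw [← AEEqFun.coeFn_le]
    filter_upwards [AEEqFun.coeFn_zero (β := ℝ) (μ := μ), AEEqFun.coeFn_const Ω δ] with ω h₀ hc
    simp [h₀, hc, hδ.le]
  have hpos : 0 ≤ nrm₁ x + AEEqFun.const Ω δ := add_nonneg (h₁.nonneg x) hδ₀
  obtain ⟨χ, hχ⟩ := exists_l0abs_mul_eq_one (K := K) hδ (le_add_of_nonneg_left (h₁.nonneg x))
  have hχx : nrm₁ (χ • x) ≤ 1 := by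
    rw [h₁.smul_eq, ← hχ]
    exact mul_le_mul_of_nonneg_left (le_add_of_nonneg_right hδ₀) (l0abs_nonneg χ)
  calc nrm₂ (T x) = (nrm₁ x + AEEqFun.const Ω δ) * nrm₂ (T (χ • x)) := by
        rw [map_smul, h₂.smul_eq, ← mul_assoc, mul_comm _ (l0abs χ), hχ, one_mul]
    _ ≤ (nrm₁ x + AEEqFun.const Ω δ) * ξ := mul_le_mul_of_nonneg_left (hξ _ hχx) hpos
    _ = ξ * (nrm₁ x + AEEqFun.const Ω δ) := mul_comm _ _

end Operator

end RNTheory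

/-- A linear operator `T` between `RN` modules `S¹`, `S²` is a.s. bounded
(there is `ξ ∈ L⁰₊` with `‖Tx‖₂ ≤ ξ‖x‖₁` for all `x`) iff `T` is a continuous module
homomorphism for the `(ε,λ)`-topologies. -/
theorem as_bounded_iff_continuous_module_hom
    {Ω : Type*} [MeasurableSpace Ω] (μ : Measure Ω) [IsProbabilityMeasure μ]
    (K : Type*) [RCLike K]
    {S₁ : Type*} [AddCommGroup S₁] [Module (Ω →ₘ[μ] K) S₁]
    {S₂ : Type*} [AddCommGroup S₂] [Module (Ω →ₘ[μ] K) S₂]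
    (nrm₁ : S₁ → Ω →ₘ[μ] ℝ) (nrm₂ : S₂ → Ω →ₘ[μ] ℝ)
    (h₁ : IsRNNorm K nrm₁) (h₂ : IsRNNorm K nrm₂)
    (T : S₁ → S₂)
    (hadd : ∀ x y, T (x + y) = T x + T y)
    (hsmulK : ∀ (c : K) (x), T ((AEEqFun.const Ω c : Ω →ₘ[μ] K) • x)
      = (AEEqFun.const Ω c : Ω →ₘ[μ] K) • T x) :
    (∃ ξ : Ω →ₘ[μ] ℝ, 0 ≤ ξ ∧ ∀ x, nrm₂ (T x) ≤ ξ * nrm₁ x) ↔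
      (@Continuous S₁ S₂ (elTop nrm₁) (elTop nrm₂) T ∧
        ∀ (ξ : Ω →ₘ[μ] K) (x), T (ξ • x) = ξ • T x) := by
  let T₀ : S₁ →+ S₂ := AddMonoidHom.mk' T hadd
  constructor
  · rintro ⟨ξ, -, hξ⟩
    exact ⟨continuous_of_le_mul h₁.nonneg T₀ hξ, map_smul_of_le_mul h₁ h₂ T₀ hsmulK hξ⟩
  · rintro ⟨hcont, hsmul⟩
    let L : S₁ →ₗ[Ω →ₘ[μ] K] S₂ := ⟨⟨T, hadd⟩, hsmul⟩
    obtain ⟨ξ, hξ⟩ := (isBoundedInProbability_image_of_continuous h₁ h₂ L hcont)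
      |>.bddAbove_of_directedOn (directedOn_image_nrm h₁ h₂ L)
    have hball : ∀ x, nrm₁ x ≤ 1 → nrm₂ (T x) ≤ ξ := fun x hx => hξ ⟨x, hx, rfl⟩
    refine ⟨ξ, ?_, le_mul_of_forall_nrm_le_one h₁ h₂ L hball⟩
    have h₀ := hball 0 (by rw [h₁.map_zero]; exact zero_le_one)
    rwa [show T 0 = 0 from T₀.map_zero, h₂.map_zero] at h₀
end
end

section
/- Let $\{T(t) : t \ge 0\}$ be an a.s. bounded $C_0$-semigroup on a complete $RN$ module $S$. Then there exist $M, \tau \in L^0_+(\mathcal{F})$ with $M \ge 1$ such that $\|T(t)\| \le M e^{\tau t}$ for all $t \ge 0$. -/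
/- Preamble: random normed modules over `L⁰(𝓕,K)`, the `(ε,λ)`-topology,
`C₀`-semigroups of continuous module homomorphisms and resolvents. -/

open MeasureTheory MeasureTheory.AEEqFun Filter Set
noncomputable section

open RNTheory

/-! Let `M = ξ ⊔ 1`, where `ξ` bounds `‖T(t)‖` on `[0, L]`. Splitting `t = nL + r` with
`n = ⌊t / L⌋` and `0 ≤ r < L`, the semigroup law gives `‖T(t)‖ ≤ M ^ (n + 1)`, and
`M ^ n ≤ exp (n (M - 1)) ≤ exp (τ t)` for `τ = (M - 1) / L`. -/

namespace MeasureTheory.AEEqFun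

variable {α : Type*} [MeasurableSpace α] {μ : Measure α}

theorem const_mono {β : Type*} [TopologicalSpace β] [Preorder β] :
    Monotone (const α : β → α →ₘ[μ] β) := fun a b hab => by
  rw [← coeFn_le]
  filter_upwards [coeFn_const α (μ := μ) a, coeFn_const α (μ := μ) b] with ω ha hb
  simpa only [ha, hb, Function.const_apply] using hab

instance instIsOrderedRing {γ : Type*} [TopologicalSpace γ] [CommRing γ] [IsTopologicalRing γ]
    [PartialOrder γ] [IsOrderedRing γ] : IsOrderedRing (α →ₘ[μ] γ) where
  add_le_add_left a b hab c := by
    rw [← coeFn_le] at hab ⊢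
    filter_upwards [hab, coeFn_add a c, coeFn_add b c] with ω h hac hbc
    simpa only [hac, hbc, Pi.add_apply] using add_le_add_left h (c ω)
  zero_le_one := by
    rw [← coeFn_le]
    filter_upwards [coeFn_zero (β := γ) (μ := μ), coeFn_one (β := γ) (μ := μ)] with ω h0 h1
    simp only [h0, h1, Pi.zero_apply, Pi.one_apply, zero_le_one]
  mul_le_mul_of_nonneg_left c hc a b hab := by
    rw [← coeFn_le] at hc hab ⊢
    filter_upwards [hc, hab, coeFn_zero (β := γ) (μ := μ), coeFn_mul c a, coeFn_mul c b]
      with ω h0c h hz hca hcb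
    rw [hz] at h0c
    simpa only [hca, hcb, Pi.mul_apply] using mul_le_mul_of_nonneg_left h h0c
  mul_le_mul_of_nonneg_right c hc a b hab := by
    rw [← coeFn_le] at hc hab ⊢
    filter_upwards [hc, hab, coeFn_zero (β := γ) (μ := μ), coeFn_mul a c, coeFn_mul b c]
      with ω h0c h hz hac hbc
    rw [hz] at h0c
    simpa only [hac, hbc, Pi.mul_apply] using mul_le_mul_of_nonneg_right h h0c

end MeasureTheory.AEEqFun

theorem pow_floor_div_le_exp {L t m : ℝ} (hL : 0 ≤ L) (ht : 0 ≤ t) (hm : 1 ≤ m) :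
    m ^ ⌊t / L⌋₊ ≤ Real.exp (t * (L⁻¹ * (m - 1))) :=
  calc m ^ ⌊t / L⌋₊ ≤ Real.exp (m - 1) ^ ⌊t / L⌋₊ := by
        gcongr
        linarith [Real.add_one_le_exp (m - 1)]
    _ = Real.exp (⌊t / L⌋₊ * (m - 1)) := (Real.exp_nat_mul _ _).symm
    _ ≤ Real.exp (t / L * (m - 1)) := by
        gcongr
        exact Nat.floor_le (by positivity)
    _ = Real.exp (t * (L⁻¹ * (m - 1))) := by ring_nf

namespace RNTheory

section OpNorm

variable {S R : Type*} [Semiring R] [PartialOrder R] [IsOrderedRing R]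

def OpNormLe (nrm : S → R) (A : S → S) (ξ : R) : Prop := ∀ x, nrm (A x) ≤ ξ * nrm x

variable {nrm : S → R} {A B : S → S} {ξ η : R}

theorem OpNormLe.mono (hA : OpNormLe nrm A ξ) (hξη : ξ ≤ η) (hnrm : ∀ x, 0 ≤ nrm x) :
    OpNormLe nrm A η := fun x =>
  (hA x).trans (mul_le_mul_of_nonneg_right hξη (hnrm x))

theorem OpNormLe.comp (hA : OpNormLe nrm A ξ) (hB : OpNormLe nrm B η) (hξ : 0 ≤ ξ) :
    OpNormLe nrm (A ∘ B) (ξ * η) := fun x =>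
  calc nrm (A (B x)) ≤ ξ * nrm (B x) := hA (B x)
    _ ≤ ξ * (η * nrm x) := mul_le_mul_of_nonneg_left (hB x) hξ
    _ = ξ * η * nrm x := (mul_assoc ξ η (nrm x)).symm

theorem opNormLe_pow_of_mem_Icc_mul {T : ℝ → S → S}
    (hT : ∀ s t, 0 ≤ s → 0 ≤ t → T (s + t) = T s ∘ T t) {L : ℝ} (hL : 0 ≤ L) {M : R}
    (hM : 1 ≤ M) (hnrm : ∀ x, 0 ≤ nrm x) (hbound : ∀ t ∈ Icc 0 L, OpNormLe nrm (T t) M) :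
    ∀ n : ℕ, ∀ t ∈ Icc 0 ((n + 1) * L), OpNormLe nrm (T t) (M ^ (n + 1))
  | 0, t, ht => by simpa using hbound t (by simpa using ht)
  | n + 1, t, ⟨ht0, htn⟩ => by
    rcases le_or_gt t L with htL | htL
    · exact (hbound t ⟨ht0, htL⟩).mono (le_self_pow₀ hM (by omega)) hnrm
    · have hsplit : T t = T L ∘ T (t - L) := by
        rw [← hT L (t - L) hL (by linarith), add_sub_cancel]
      have hrest := opNormLe_pow_of_mem_Icc_mul hT hL hM hnrm hbound n (t - L)
        ⟨by linarith, by push_cast at htn; linarith⟩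
      rw [hsplit, pow_succ' M (n + 1)]
      exact (hbound L ⟨hL, le_rfl⟩).comp hrest (zero_le_one.trans hM)

end OpNorm

variable {Ω : Type*} [MeasurableSpace Ω] {μ : Measure Ω}

theorem pow_floor_div_le_l0exp {L t : ℝ} (hL : 0 ≤ L) (ht : 0 ≤ t) {M : Ω →ₘ[μ] ℝ}
    (hM : 1 ≤ M) :
    M ^ ⌊t / L⌋₊ ≤ l0exp (AEEqFun.const Ω t * (AEEqFun.const Ω L⁻¹ * (M - 1))) := by
  rw [← AEEqFun.coeFn_le] at hM ⊢
  filter_upwards [hM, AEEqFun.coeFn_one (β := ℝ) (μ := μ), AEEqFun.coeFn_pow M ⌊t / L⌋₊,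
    AEEqFun.coeFn_comp Real.exp Real.continuous_exp
      (AEEqFun.const Ω t * (AEEqFun.const Ω L⁻¹ * (M - 1))),
    AEEqFun.coeFn_mul (AEEqFun.const Ω t) (AEEqFun.const Ω L⁻¹ * (M - 1)),
    AEEqFun.coeFn_mul (AEEqFun.const Ω L⁻¹) (M - 1), AEEqFun.coeFn_sub M 1,
    AEEqFun.coeFn_const Ω (μ := μ) t, AEEqFun.coeFn_const Ω (μ := μ) L⁻¹]
    with ω hMω h1 hpow hexp hmul₁ hmul₂ hsub hct hcL
  simp only [h1, Pi.one_apply] at hMω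
  rw [hpow, l0exp, hexp]
  simp only [Pi.pow_apply, Function.comp_apply, hmul₁, Pi.mul_apply, hmul₂, hsub, Pi.sub_apply, h1,
    Pi.one_apply, hct, hcL, Function.const_apply]
  exact pow_floor_div_le_exp hL ht hMω

end RNTheory

theorem as_bounded_semigroup_exponential_bound_general
    {Ω : Type*} [MeasurableSpace Ω] (μ : Measure Ω) [IsProbabilityMeasure μ]
    (K : Type*) [RCLike K] {S : Type*} [AddCommGroup S] [Module (Ω →ₘ[μ] K) S]
    (nrm : S → Ω →ₘ[μ] ℝ) (h : IsRNNorm K nrm)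
    (T : ℝ → S →ₗ[Ω →ₘ[μ] K] S) (hT : IsC0Semigroup K nrm T)
    (hb : IsASBounded K nrm T) :
    ∃ M τ : Ω →ₘ[μ] ℝ, 0 ≤ M ∧ 0 ≤ τ ∧ 1 ≤ M ∧
      ∀ t, 0 ≤ t → ∀ x, nrm (T t x) ≤ (M * l0exp (AEEqFun.const Ω t * τ)) * nrm x := by
  obtain ⟨L, hL, ξ, -, hξ⟩ := hb
  have hM : 1 ≤ ξ ⊔ 1 := le_sup_right
  have hM0 : 0 ≤ ξ ⊔ 1 := zero_le_one.trans hM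
  have hsemigroup : ∀ s t, 0 ≤ s → 0 ≤ t → (⇑(T (s + t)) : S → S) = T s ∘ T t :=
    fun s t hs ht => by rw [hT.comp_eq s t hs ht, LinearMap.coe_comp]
  have hpow := opNormLe_pow_of_mem_Icc_mul (T := fun t => T t) hsemigroup hL.le hM h.nonneg
    fun t ht => OpNormLe.mono (hξ t ht) le_sup_left h.nonneg
  refine ⟨ξ ⊔ 1, AEEqFun.const Ω L⁻¹ * (ξ ⊔ 1 - 1), hM0,
    mul_nonneg (AEEqFun.const_mono (inv_nonneg.2 hL.le)) (sub_nonneg.2 hM), hM, fun t ht => ?_⟩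
  refine (hpow ⌊t / L⌋₊ t ⟨ht, ?_⟩).mono ?_ h.nonneg
  · exact (div_le_iff₀ hL).1 (Nat.lt_floor_add_one (t / L)).le
  · rw [pow_succ']
    exact mul_le_mul_of_nonneg_left (pow_floor_div_le_l0exp hL.le ht hM) hM0

/-- If `{T(t) : t ≥ 0}` is an a.s. bounded `C₀`-semigroup on a complete
`RN` module `S`, then there exist `M, τ ∈ L⁰₊(𝓕)` with `M ≥ 1` such that
`‖T(t)‖ ≤ M e^{τ t}` for all `t ≥ 0`. -/
theorem as_bounded_semigroup_exponential_bound
    {Ω : Type*} [MeasurableSpace Ω] (μ : Measure Ω) [IsProbabilityMeasure μ]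
    (K : Type*) [RCLike K] {S : Type*} [AddCommGroup S] [Module (Ω →ₘ[μ] K) S]
    (nrm : S → Ω →ₘ[μ] ℝ) (h : IsRNNorm K nrm) (hcomplete : IsCompleteRN nrm)
    (T : ℝ → S →ₗ[Ω →ₘ[μ] K] S) (hT : IsC0Semigroup K nrm T)
    (hb : IsASBounded K nrm T) :
    ∃ M τ : Ω →ₘ[μ] ℝ, 0 ≤ M ∧ 0 ≤ τ ∧ 1 ≤ M ∧
      ∀ t, 0 ≤ t → ∀ x, nrm (T t x) ≤ (M * l0exp (AEEqFun.const Ω t * τ)) * nrm x :=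
  as_bounded_semigroup_exponential_bound_general μ K nrm h T hT hb
end
end

section
/- Let $\{T(t) : t \ge 0\}$ be an a.s. bounded $C_0$-semigroup on a complete $RN$ module $S$ with generator $(A, D(A))$. For each $x \in D(A)$, the orbit map $f(t) = T(t)x$ is $L^0$-Lipschitz on every finite interval $[0,r]$. -/
/- Preamble: random normed modules over `L⁰(𝓕,K)`, the `(ε,λ)`-topology,
`C₀`-semigroups of continuous module homomorphisms and resolvents. -/

open MeasureTheory MeasureTheory.AEEqFun Filter Set
noncomputable section

open RNTheory

/-!
Writing `v t = (T t x - x) / t`, so that `v t → y` as `t ↓ 0`, split `u ∈ (0, r]` into `n + 1`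
steps of length `s = u / (n + 1)`. Telescoping `T u x - x` along this grid, with the bound
`‖T t‖ ≤ η` on `[0, r]` (obtained by iterating the a.s. bound on `[0, L]`), gives
`‖T u x - x‖ ≤ (n + 1) η ‖T s x - x‖ = u η ‖v s‖ ≤ u η (‖y‖ + ‖v s - y‖)`.
Convergence in the `(ε, λ)`-topology is convergence in probability, so along a subsequence
`‖v s - y‖ → 0` almost surely, whence `‖T u x - x‖ ≤ u η ‖y‖`. Finally
`T t₁ x - T t₂ x = T t₂ (T (t₁ - t₂) x - x)` for `t₂ ≤ t₁`.
-/

open Topology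

namespace MeasureTheory.AEEqFun

variable {Ω : Type*} [MeasurableSpace Ω] {μ : Measure Ω} {γ : Type*} [TopologicalSpace γ]

instance [AddCommMonoid γ] [ContinuousAdd γ] [PartialOrder γ] [IsOrderedAddMonoid γ] :
    IsOrderedAddMonoid (Ω →ₘ[μ] γ) where
  add_le_add_left a b hab c := by
    rw [← coeFn_le] at hab ⊢
    filter_upwards [hab, coeFn_add a c, coeFn_add b c] with ω hab hac hbc
    simpa only [hac, hbc, Pi.add_apply] using add_le_add hab le_rfl

instance [Zero γ] [One γ] [Preorder γ] [ZeroLEOneClass γ] : ZeroLEOneClass (Ω →ₘ[μ] γ) where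
  zero_le_one := by
    rw [← coeFn_le]
    filter_upwards [coeFn_zero (μ := μ) (β := γ), coeFn_one (μ := μ) (β := γ)] with ω h0 h1
    simp [h0, h1]

instance [CommRing γ] [IsTopologicalRing γ] [PartialOrder γ] [IsOrderedRing γ] :
    IsOrderedRing (Ω →ₘ[μ] γ) := by
  refine IsOrderedRing.of_mul_nonneg fun a b ha hb => ?_
  rw [← coeFn_le] at ha hb ⊢
  filter_upwards [ha, hb, coeFn_zero (μ := μ) (β := γ), coeFn_mul a b] with ω ha hb h0 hab
  simp only [h0, Pi.zero_apply] at ha hb ⊢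
  exact hab ▸ mul_nonneg ha hb

theorem const_mul [Mul γ] [ContinuousMul γ] (a b : γ) :
    const Ω (a * b) = (const Ω a * const Ω b : Ω →ₘ[μ] γ) := rfl

theorem const_nonneg [Zero γ] [Preorder γ] {a : γ} (ha : 0 ≤ a) :
    (0 : Ω →ₘ[μ] γ) ≤ const Ω a := by
  rw [← coeFn_le]
  filter_upwards [coeFn_zero (μ := μ) (β := γ), coeFn_const Ω (μ := μ) a] with ω h0 ha'
  simpa [h0, ha'] using ha

theorem le_of_le_add_mul_of_tendstoInMeasure {f g c : Ω →ₘ[μ] ℝ} {a : ℕ → Ω →ₘ[μ] ℝ}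
    (hle : ∀ n, f ≤ g + c * a n) (ha : TendstoInMeasure μ (fun n => ⇑(a n)) atTop 0) :
    f ≤ g := by
  obtain ⟨ns, -, hns⟩ := ha.exists_seq_tendsto_ae
  have hle' : ∀ᵐ ω ∂μ, ∀ n, f ω ≤ g ω + c ω * a n ω := ae_all_iff.2 fun n => by
    filter_upwards [coeFn_le.2 (hle n), coeFn_add g (c * a n), coeFn_mul c (a n)]
      with ω h hadd hmul
    simpa only [hadd, hmul, Pi.add_apply, Pi.mul_apply] using h
  rw [← coeFn_le]
  filter_upwards [hle', hns] with ω hω hlim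
  have : Tendsto (fun k => g ω + c ω * a (ns k) ω) atTop (𝓝 (g ω)) := by
    simpa using (hlim.const_mul (c ω)).const_add (g ω)
  exact ge_of_tendsto' this fun k => hω (ns k)

end MeasureTheory.AEEqFun

namespace RNTheory

section RNNorm

variable {Ω : Type*} [MeasurableSpace Ω] {μ : Measure Ω} {K : Type*} [RCLike K]
  {S : Type*} [AddCommGroup S] [Module (Ω →ₘ[μ] K) S] {nrm : S → Ω →ₘ[μ] ℝ}

theorem rconst_mul_rconst_inv {c : ℝ} (hc : c ≠ 0) : rconst K μ c * rconst K μ c⁻¹ = 1 := by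
  rw [rconst, rconst, ← const_mul, ← RCLike.ofReal_mul, mul_inv_cancel₀ hc, RCLike.ofReal_one]
  rfl

namespace IsRNNorm

theorem rconst_smul (h : IsRNNorm K nrm) (c : ℝ) (z : S) :
    nrm (rconst K μ c • z) = const Ω |c| * nrm z := by
  rw [h.smul_eq, show l0abs (rconst K μ c) = const Ω ‖(c : K)‖ from rfl, RCLike.norm_ofReal]

theorem map_zero_s13 (h : IsRNNorm K nrm) : nrm 0 = 0 := by
  simpa [show const Ω (0 : ℝ) = (0 : Ω →ₘ[μ] ℝ) from rfl] using h.rconst_smul 0 0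

theorem map_sub_rev (h : IsRNNorm K nrm) (x y : S) : nrm (x - y) = nrm (y - x) := by
  have hneg : rconst K μ (-1) = -1 := by
    simp only [rconst, RCLike.ofReal_neg, RCLike.ofReal_one]
    rfl
  rw [← neg_sub, ← neg_one_smul (Ω →ₘ[μ] K), ← hneg, h.rconst_smul, abs_neg, abs_one]
  exact one_mul _

end IsRNNorm

end RNNorm

section ElTop

variable {Ω : Type*} [MeasurableSpace Ω] {μ : Measure Ω} [IsProbabilityMeasure μ]
  {S : Type*} [AddCommGroup S] {nrm : S → Ω →ₘ[μ] ℝ}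

theorem Nset_isOpen (hadd : ∀ x y, nrm (x + y) ≤ nrm x + nrm y) (y : S) (ε lam : ℝ) :
    IsOpen[elTop nrm] (Nset nrm y ε lam) := by
  intro z hz
  change 1 - lam < μ.real {ω | nrm (z - y) ω < ε} at hz
  set F := nrm (z - y)
  -- Shrinking `{F < ε}` to `{F < ε - δ}` leaves room `δ` for the triangle inequality.
  set A : ℕ → Set Ω := fun n => {ω | F ω < ε - 1 / (n + 1)}
  have hA : Tendsto (fun n => μ.real (A n)) atTop (𝓝 (μ.real {ω | F ω < ε})) := by
    have hmono : Monotone A := fun m n hmn ω (hω : F ω < _) =>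
      show F ω < _ by linarith [Nat.one_div_le_one_div (α := ℝ) hmn]
    have hUnion : ⋃ n, A n = {ω | F ω < ε} := by
      ext ω
      simp only [A, mem_iUnion, mem_ofPred_eq]
      refine ⟨fun ⟨n, hn⟩ => hn.trans_le (by simp only [sub_le_self_iff]; positivity),
        fun hω => ?_⟩
      obtain ⟨n, hn⟩ := exists_nat_one_div_lt (sub_pos.2 hω)
      exact ⟨n, by linarith⟩
    rw [← hUnion]
    exact (ENNReal.tendsto_toReal (measure_ne_top _ _)).comp (tendsto_measure_iUnion_atTop hmono)
  obtain ⟨n, hn⟩ := (hA.eventually (lt_mem_nhds hz)).exists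
  set θ := min (μ.real (A n) - (1 - lam)) (1 / 2)
  have hθ : θ ≤ μ.real (A n) - (1 - lam) := min_le_left _ _
  refine ⟨1 / (n + 1), by positivity, θ, lt_min (by linarith) (by norm_num),
    (min_le_right _ _).trans_lt (by norm_num), fun w hw => ?_⟩
  set B := {ω | nrm (w - z) ω < 1 / (n + 1)}
  change 1 - θ < μ.real B at hw
  change 1 - lam < μ.real {ω | nrm (w - y) ω < ε}
  have hsub : (A n ∩ B : Set Ω) ≤ᵐ[μ] ({ω | nrm (w - y) ω < ε} : Set Ω) := by
    filter_upwards [coeFn_le.2 (hadd (w - z) (z - y)), coeFn_add (nrm (w - z)) F]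
      with ω htri hsum ⟨hA, hB⟩
    rw [sub_add_sub_cancel, hsum, Pi.add_apply] at htri
    change F ω < _ at hA
    change nrm (w - z) ω < _ at hB
    change nrm (w - y) ω < ε
    linarith
  have hinter := measureReal_union_add_inter₀ (s := A n) (t := B)
    (nullMeasurableSet_lt (nrm _).aemeasurable aemeasurable_const)
  have hle : μ.real (A n ∩ B) ≤ μ.real {ω | nrm (w - y) ω < ε} :=
    ENNReal.toReal_mono (measure_ne_top _ _) (measure_mono_ae hsub)
  linarith [measureReal_le_one (μ := μ) (s := A n ∪ B)]

variable {K : Type*} [RCLike K] [Module (Ω →ₘ[μ] K) S]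

theorem Nset_mem_nhds (h : IsRNNorm K nrm) (y : S) {ε lam : ℝ} (hε : 0 < ε) (hlam : 0 < lam) :
    Nset nrm y ε lam ∈ @nhds S (elTop nrm) y := by
  refine @IsOpen.mem_nhds S (elTop nrm) _ _ (Nset_isOpen h.add_le y ε lam) ?_
  have hfull : {ω | nrm (y - y) ω < ε} =ᵐ[μ] univ := by
    filter_upwards [coeFn_zero (μ := μ) (β := ℝ)] with ω h0
    simp [h.map_zero_s13, hε]
  change 1 - lam < μ.real _
  rw [measureReal_congr hfull, probReal_univ]
  linarith

theorem tendstoInMeasure_of_tendsto_elTop (h : IsRNNorm K nrm) {ι : Type*} {l : Filter ι}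
    {v : ι → S} {y : S} (hv : Tendsto v l (@nhds S (elTop nrm) y)) :
    TendstoInMeasure μ (fun i => ⇑(nrm (v i - y))) l 0 := by
  refine tendstoInMeasure_iff_measureReal_dist.2 fun ε hε => tendsto_order.2
    ⟨fun a ha => .of_forall fun i => ha.trans_le measureReal_nonneg, fun lam hlam => ?_⟩
  filter_upwards [hv (Nset_mem_nhds h y hε hlam)] with i hi
  change 1 - lam < μ.real {ω | nrm (v i - y) ω < ε} at hi
  have hsub : {ω | ε ≤ dist (nrm (v i - y) ω) ((0 : Ω → ℝ) ω)} ≤ᵐ[μ]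
      {ω | nrm (v i - y) ω < ε}ᶜ := by
    filter_upwards [coeFn_le.2 (h.nonneg (v i - y)), coeFn_zero (μ := μ) (β := ℝ)]
      with ω hnn h0 hω
    change ε ≤ dist _ ((0 : Ω → ℝ) ω) at hω
    simp only [h0, Pi.zero_apply, Real.dist_eq, sub_zero] at hnn hω
    exact not_lt.2 (abs_of_nonneg hnn ▸ hω)
  calc μ.real {ω | ε ≤ dist (nrm (v i - y) ω) ((0 : Ω → ℝ) ω)}
      ≤ μ.real {ω | nrm (v i - y) ω < ε}ᶜ :=
        ENNReal.toReal_mono (measure_ne_top _ _) (measure_mono_ae hsub)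
    _ = 1 - μ.real {ω | nrm (v i - y) ω < ε} :=
        probReal_compl_eq_one_sub₀ (nullMeasurableSet_lt (nrm _).aemeasurable aemeasurable_const)
    _ < lam := by linarith

end ElTop

section Semigroup

variable {Ω : Type*} [MeasurableSpace Ω] {μ : Measure Ω}
  {K : Type*} [RCLike K] {S : Type*} [AddCommGroup S] [Module (Ω →ₘ[μ] K) S]
  {nrm : S → Ω →ₘ[μ] ℝ} {T : ℝ → S →ₗ[Ω →ₘ[μ] K] S}

def NormBoundOn (nrm : S → Ω →ₘ[μ] ℝ) (T : ℝ → S →ₗ[Ω →ₘ[μ] K] S) (r : ℝ)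
    (η : Ω →ₘ[μ] ℝ) : Prop :=
  ∀ t ∈ Icc 0 r, ∀ z, nrm (T t z) ≤ η * nrm z

theorem NormBoundOn.mono {r r' : ℝ} {η : Ω →ₘ[μ] ℝ} (h : NormBoundOn nrm T r η)
    (hr : r' ≤ r) : NormBoundOn nrm T r' η :=
  fun t ht => h t ⟨ht.1, ht.2.trans hr⟩

variable [IsFiniteMeasure μ]

theorem IsC0Semigroup.apply_add (hT : IsC0Semigroup K nrm T) {s t : ℝ} (hs : 0 ≤ s)
    (ht : 0 ≤ t) (z : S) : T (s + t) z = T s (T t z) := by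
  rw [hT.comp_eq s t hs ht, LinearMap.comp_apply]

namespace NormBoundOn

theorem zero (hT : IsC0Semigroup K nrm T) : NormBoundOn nrm T 0 1 := by
  rintro t ⟨ht₀, ht₀'⟩ z
  rw [le_antisymm ht₀' ht₀, hT.id_eq, one_mul, LinearMap.id_apply]

theorem add (hT : IsC0Semigroup K nrm T) {p q : ℝ} {a b : Ω →ₘ[μ] ℝ}
    (ha : NormBoundOn nrm T p a) (hb : NormBoundOn nrm T q b) (hp : 0 ≤ p) (hq : 0 ≤ q)
    (ha₀ : 0 ≤ a) : NormBoundOn nrm T (p + q) (a * b) := by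
  rintro t ⟨ht₀, ht⟩ z
  have hs : min t p ∈ Icc 0 p := ⟨le_min ht₀ hp, min_le_right _ _⟩
  have hts : t - min t p ∈ Icc 0 q := by
    refine ⟨sub_nonneg.2 (min_le_left _ _), ?_⟩
    rcases le_total t p with htp | htp <;> simp [htp] <;> linarith
  calc nrm (T t z) = nrm (T (min t p) (T (t - min t p) z)) := by
        rw [← hT.apply_add hs.1 hts.1, add_sub_cancel]
    _ ≤ a * nrm (T (t - min t p) z) := ha _ hs _
    _ ≤ a * (b * nrm z) := mul_le_mul_of_nonneg_left (hb _ hts _) ha₀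
    _ = a * b * nrm z := (mul_assoc _ _ _).symm

theorem pow (hT : IsC0Semigroup K nrm T) {L : ℝ} {ξ : Ω →ₘ[μ] ℝ} (h : NormBoundOn nrm T L ξ)
    (hL : 0 ≤ L) (hξ : 0 ≤ ξ) (n : ℕ) : NormBoundOn nrm T (n * L) (ξ ^ n) := by
  induction n with
  | zero => simpa using zero hT
  | succ n ih =>
    rw [pow_succ', show ((n + 1 : ℕ) : ℝ) * L = L + n * L by push_cast; ring]
    exact h.add hT ih hL (by positivity) hξ

end NormBoundOn

theorem IsASBounded.exists_normBoundOn (hT : IsC0Semigroup K nrm T)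
    (hb : IsASBounded K nrm T) (r : ℝ) : ∃ η, 0 ≤ η ∧ NormBoundOn nrm T r η := by
  obtain ⟨L, hL, ξ, hξ, hbound⟩ := hb
  obtain ⟨n, hn⟩ := exists_nat_ge (r / L)
  exact ⟨ξ ^ n, pow_nonneg hξ n,
    (NormBoundOn.pow hT hbound hL.le hξ n).mono ((div_le_iff₀ hL).1 hn)⟩

theorem nrm_apply_natCast_mul_sub_le (h : IsRNNorm K nrm) (hT : IsC0Semigroup K nrm T)
    {r : ℝ} {η : Ω →ₘ[μ] ℝ} (hη : NormBoundOn nrm T r η) (x : S) {s : ℝ} (hs : 0 ≤ s) :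
    ∀ m : ℕ, m * s ≤ r → nrm (T (m * s) x - x) ≤ m * (η * nrm (T s x - x))
  | 0, _ => by simp [hT.id_eq, h.map_zero_s13]
  | m + 1, hm => by
    have hm' : m * s ≤ r := by push_cast at hm; linarith
    have hsplit : T ((m + 1 : ℕ) * s) x - x = T (m * s) (T s x - x) + (T (m * s) x - x) := by
      rw [map_sub, ← hT.apply_add (by positivity) hs]
      push_cast
      rw [add_one_mul]
      abel
    calc nrm (T ((m + 1 : ℕ) * s) x - x)
        ≤ nrm (T (m * s) (T s x - x)) + nrm (T (m * s) x - x) := hsplit ▸ h.add_le _ _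
      _ ≤ η * nrm (T s x - x) + m * (η * nrm (T s x - x)) :=
        add_le_add (hη _ ⟨by positivity, hm'⟩ _)
          (nrm_apply_natCast_mul_sub_le h hT hη x hs m hm')
      _ = (m + 1 : ℕ) * (η * nrm (T s x - x)) := by push_cast; ring

end Semigroup

section Generator

variable {Ω : Type*} [MeasurableSpace Ω] {μ : Measure Ω} [IsProbabilityMeasure μ]
  {K : Type*} [RCLike K] {S : Type*} [AddCommGroup S] [Module (Ω →ₘ[μ] K) S]
  {nrm : S → Ω →ₘ[μ] ℝ} {T : ℝ → S →ₗ[Ω →ₘ[μ] K] S}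

theorem GenRel.nrm_apply_sub_le (h : IsRNNorm K nrm) (hT : IsC0Semigroup K nrm T) {x y : S}
    (hxy : GenRel K nrm T x y) {r : ℝ} {η : Ω →ₘ[μ] ℝ} (hη : NormBoundOn nrm T r η)
    (hη₀ : 0 ≤ η) {u : ℝ} (hu : u ∈ Icc 0 r) :
    nrm (T u x - x) ≤ η * nrm y * const Ω u := by
  rcases hu.1.eq_or_lt with rfl | hu₀
  · simp [hT.id_eq, h.map_zero_s13, show const Ω (0 : ℝ) = (0 : Ω →ₘ[μ] ℝ) from rfl]
  set v : ℝ → S := fun t => rconst K μ t⁻¹ • (T t x - x)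
  set s : ℕ → ℝ := fun n => u / (n + 1)
  have hs : Tendsto s atTop (𝓝[>] 0) := by
    refine tendsto_nhdsWithin_iff.2 ⟨?_, .of_forall fun n => mem_Ioi.2 (by positivity)⟩
    simpa [s, div_eq_mul_inv] using tendsto_one_div_add_atTop_nhds_zero_nat.const_mul u
  refine le_of_le_add_mul_of_tendstoInMeasure (c := η * const Ω u)
    (a := fun n => nrm (v (s n) - y)) (fun n => ?_)
    (tendstoInMeasure_of_tendsto_elTop h (hxy.comp hs))
  have hsn : 0 < s n := by positivity
  have hus : ((n + 1 : ℕ) : ℝ) * s n = u := by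
    simp only [s]
    field_simp
    push_cast
    ring
  have hTs : nrm (T (s n) x - x) = const Ω (s n) * nrm (v (s n)) := by
    have hsmul : T (s n) x - x = rconst K μ (s n) • v (s n) := by
      rw [smul_smul, rconst_mul_rconst_inv hsn.ne', one_smul]
    rw [hsmul, h.rconst_smul, abs_of_pos hsn]
  have hcast : ((n + 1 : ℕ) : Ω →ₘ[μ] ℝ) = const Ω ((n + 1 : ℕ) : ℝ) := rfl
  calc nrm (T u x - x) = nrm (T ((n + 1 : ℕ) * s n) x - x) := by rw [hus]
    _ ≤ (n + 1 : ℕ) * (η * nrm (T (s n) x - x)) :=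
        nrm_apply_natCast_mul_sub_le h hT hη x hsn.le (n + 1) (hus.trans_le hu.2)
    _ = η * const Ω u * nrm (v (s n)) := by rw [hTs, ← hus, const_mul, hcast]; ring
    _ ≤ η * const Ω u * (nrm y + nrm (v (s n) - y)) :=
        mul_le_mul_of_nonneg_left (by simpa using h.add_le y (v (s n) - y))
          (mul_nonneg hη₀ (const_nonneg hu.1))
    _ = η * nrm y * const Ω u + η * const Ω u * nrm (v (s n) - y) := by ring

theorem GenRel.nrm_apply_sub_apply_le (h : IsRNNorm K nrm) (hT : IsC0Semigroup K nrm T)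
    {x y : S} (hxy : GenRel K nrm T x y) {r : ℝ} {η : Ω →ₘ[μ] ℝ} (hη : NormBoundOn nrm T r η)
    (hη₀ : 0 ≤ η) {t₁ t₂ : ℝ} (ht₂ : 0 ≤ t₂) (hle : t₂ ≤ t₁) (ht₁ : t₁ ≤ r) :
    nrm (T t₁ x - T t₂ x) ≤ η * (η * nrm y) * const Ω (t₁ - t₂) := by
  have hd : t₁ - t₂ ∈ Icc 0 r := ⟨sub_nonneg.2 hle, by linarith⟩
  calc nrm (T t₁ x - T t₂ x) = nrm (T t₂ (T (t₁ - t₂) x - x)) := by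
        rw [map_sub, ← hT.apply_add ht₂ hd.1, add_sub_cancel]
    _ ≤ η * nrm (T (t₁ - t₂) x - x) := hη _ ⟨ht₂, hle.trans ht₁⟩ _
    _ ≤ η * (η * nrm y * const Ω (t₁ - t₂)) :=
        mul_le_mul_of_nonneg_left (hxy.nrm_apply_sub_le h hT hη hη₀ hd) hη₀
    _ = η * (η * nrm y) * const Ω (t₁ - t₂) := by ring

end Generator

end RNTheory

theorem orbit_map_L0_lipschitz_general
    {Ω : Type*} [MeasurableSpace Ω] (μ : Measure Ω) [IsProbabilityMeasure μ]
    (K : Type*) [RCLike K] {S : Type*} [AddCommGroup S] [Module (Ω →ₘ[μ] K) S]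
    (nrm : S → Ω →ₘ[μ] ℝ) (h : IsRNNorm K nrm)
    (T : ℝ → S →ₗ[Ω →ₘ[μ] K] S) (hT : IsC0Semigroup K nrm T)
    (hb : IsASBounded K nrm T) :
    ∀ x y, GenRel K nrm T x y → ∀ r : ℝ, 0 < r →
      ∃ ξ : Ω →ₘ[μ] ℝ, 0 ≤ ξ ∧ ∀ t₁ ∈ Icc 0 r, ∀ t₂ ∈ Icc 0 r,
        nrm (T t₁ x - T t₂ x) ≤ ξ * AEEqFun.const Ω |t₁ - t₂| := by
  intro x y hxy r _
  obtain ⟨η, hη₀, hη⟩ := hb.exists_normBoundOn hT r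
  have hy := h.nonneg y
  refine ⟨η * (η * nrm y), by positivity, fun t₁ ht₁ t₂ ht₂ => ?_⟩
  rcases le_total t₂ t₁ with hle | hle
  · rw [abs_of_nonneg (sub_nonneg.2 hle)]
    exact hxy.nrm_apply_sub_apply_le h hT hη hη₀ ht₂.1 hle ht₁.2
  · rw [h.map_sub_rev, abs_sub_comm, abs_of_nonneg (sub_nonneg.2 hle)]
    exact hxy.nrm_apply_sub_apply_le h hT hη hη₀ ht₁.1 hle ht₂.2

/-- Let `{T(t) : t ≥ 0}` be an a.s. bounded `C₀`-semigroup on a complete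
`RN` module `S` with generator `(A, D(A))`. For each `x ∈ D(A)`, the orbit map
`f(t) = T(t)x` is `L⁰`-Lipschitz on every finite interval `[0,r]`. -/
theorem orbit_map_L0_lipschitz
    {Ω : Type*} [MeasurableSpace Ω] (μ : Measure Ω) [IsProbabilityMeasure μ]
    (K : Type*) [RCLike K] {S : Type*} [AddCommGroup S] [Module (Ω →ₘ[μ] K) S]
    (nrm : S → Ω →ₘ[μ] ℝ) (h : IsRNNorm K nrm) (hcomplete : IsCompleteRN nrm)
    (T : ℝ → S →ₗ[Ω →ₘ[μ] K] S) (hT : IsC0Semigroup K nrm T)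
    (hb : IsASBounded K nrm T) :
    ∀ x y, GenRel K nrm T x y → ∀ r : ℝ, 0 < r →
      ∃ ξ : Ω →ₘ[μ] ℝ, 0 ≤ ξ ∧ ∀ t₁ ∈ Icc 0 r, ∀ t₂ ∈ Icc 0 r,
        nrm (T t₁ x - T t₂ x) ≤ ξ * AEEqFun.const Ω |t₁ - t₂| :=
  orbit_map_L0_lipschitz_general μ K nrm h T hT hb
end
end

section
/- Let $\{T(t) : t \ge 0\}$ be an a.s. bounded $C_0$-semigroup on a complete $RN$ module $S$ with generator $(A,D(A))$. Then for all $x \in D(A)$ and $r > 0$: $\frac{d}{dt}T(t)x = AT(t)x = T(t)Ax$ and $T(r)x - x = \int_0^r T(s)Ax\,ds = \int_0^r AT(s)x\,ds$. -/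
/- Preamble: random normed modules over `L⁰(𝓕,K)`, the `(ε,λ)`-topology,
`C₀`-semigroups of continuous module homomorphisms and resolvents. -/

open MeasureTheory MeasureTheory.AEEqFun Filter Set
noncomputable section

open RNTheory

/-!
Convergence in the `(ε,λ)`-topology is convergence in probability of the random norm
`‖f i - a‖`, and multiplying by an a.s. finite random factor `ξ` preserves convergence in
probability to `0`. Hence the Banach-space arguments carry over once `‖T(t)v‖ ≤ ξ ‖v‖` a.s.,
uniformly for `t` in a compact interval: `T(t)` commutes with the difference quotients of the
orbit, a left difference quotient at `t` is `T(t + dt)` applied to a right one at `0`, and the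
Riemann sums differ from the telescoping sum `T(r)x - x = ∑ T(iτ)(T(τ)x - x)` by terms
controlled by the difference quotient at `τ`.
-/

open Topology

namespace MeasureTheory

variable {α ι E : Type*} {m : MeasurableSpace α} {μ : Measure α} {l : Filter ι}

theorem TendstoInMeasure.of_ae_norm_le [SeminormedAddCommGroup E] {f g : ι → α → E}
    (hg : TendstoInMeasure μ g l 0) (hfg : ∀ᶠ i in l, ∀ᵐ x ∂μ, ‖f i x‖ ≤ ‖g i x‖) :
    TendstoInMeasure μ f l 0 := by
  rw [tendstoInMeasure_iff_norm] at hg ⊢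
  intro ε hε
  refine tendsto_of_tendsto_of_tendsto_of_le_of_le' tendsto_const_nhds (hg ε hε)
    (Eventually.of_forall fun _ => zero_le) ?_
  filter_upwards [hfg] with i hi
  refine measure_mono_ae ?_
  filter_upwards [hi] with x hx (hεx : ε ≤ ‖f i x - (0 : α → E) x‖)
  simp only [Pi.zero_apply, sub_zero] at hεx ⊢
  exact hεx.trans hx

theorem TendstoInMeasure.add [SeminormedAddCommGroup E] {f g : ι → α → E} {a b : α → E}
    (hf : TendstoInMeasure μ f l a) (hg : TendstoInMeasure μ g l b) :
    TendstoInMeasure μ (fun i => f i + g i) l (a + b) := by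
  rw [tendstoInMeasure_iff_norm] at hf hg ⊢
  intro ε hε
  have hsum := (hf (ε / 2) (half_pos hε)).add (hg (ε / 2) (half_pos hε))
  rw [add_zero] at hsum
  refine tendsto_of_tendsto_of_tendsto_of_le_of_le tendsto_const_nhds hsum
    (fun _ => zero_le) fun i => (measure_mono fun x hx => ?_).trans (measure_union_le _ _)
  by_contra! hsmall
  simp only [mem_union, mem_ofPred_eq, not_or, not_le] at hsmall hx
  have htri : ‖(f i + g i) x - (a + b) x‖ ≤ ‖f i x - a x‖ + ‖g i x - b x‖ := by
    simpa [add_sub_add_comm] using norm_add_le (f i x - a x) (g i x - b x)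
  linarith

theorem tendsto_measure_setOf_le_norm_atTop [IsFiniteMeasure μ] [SeminormedAddCommGroup E]
    {ξ : α → E} (hξ : AEStronglyMeasurable ξ μ) :
    Tendsto (fun M : ℝ => μ {x | M ≤ ‖ξ x‖}) atTop (𝓝 0) := by
  have hempty : (⋂ M : ℝ, {x | M ≤ ‖ξ x‖}) = ∅ :=
    iInter_eq_empty_iff.2 fun x => ⟨‖ξ x‖ + 1, by simp⟩
  have := tendsto_measure_iInter_atTop (μ := μ)
    (fun M => nullMeasurableSet_le aemeasurable_const hξ.norm.aemeasurable)
    (fun M N hMN x (hx : N ≤ ‖ξ x‖) => hMN.trans hx) ⟨0, measure_ne_top μ _⟩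
  rwa [hempty, measure_empty] at this

theorem TendstoInMeasure.mul_left [IsFiniteMeasure μ] {R : Type*} [SeminormedRing R]
    {ξ : α → R} (hξ : AEStronglyMeasurable ξ μ) {f : ι → α → R}
    (hf : TendstoInMeasure μ f l 0) : TendstoInMeasure μ (fun i x => ξ x * f i x) l 0 := by
  rw [tendstoInMeasure_iff_norm] at hf ⊢
  intro ε hε
  rw [ENNReal.tendsto_nhds_zero]
  intro δ hδ
  have hδ2 : 0 < δ / 2 := ENNReal.half_pos hδ.ne'
  obtain ⟨M, hMξ, hM⟩ := ((ENNReal.tendsto_nhds_zero.1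
    (tendsto_measure_setOf_le_norm_atTop hξ) _ hδ2).and (eventually_gt_atTop 0)).exists
  filter_upwards [ENNReal.tendsto_nhds_zero.1 (hf (ε / M) (div_pos hε hM)) _ hδ2] with i hi
  calc μ {x | ε ≤ ‖ξ x * f i x - (0 : α → R) x‖}
      ≤ μ ({x | M ≤ ‖ξ x‖} ∪ {x | ε / M ≤ ‖f i x - (0 : α → R) x‖}) := by
        refine measure_mono fun x hx => ?_
        by_contra! hsmall
        simp only [mem_union, mem_ofPred_eq, not_or, not_le, Pi.zero_apply, sub_zero]
          at hsmall hx
        have hprod : ‖ξ x‖ * ‖f i x‖ < ε :=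
          calc ‖ξ x‖ * ‖f i x‖ ≤ M * ‖f i x‖ := by gcongr; exact hsmall.1.le
            _ < M * (ε / M) := by gcongr; exact hsmall.2
            _ = ε := by field_simp
        linarith [norm_mul_le (ξ x) (f i x)]
    _ ≤ δ / 2 + δ / 2 := (measure_union_le _ _).trans (add_le_add hMξ hi)
    _ = δ := ENNReal.add_halves δ

end MeasureTheory

namespace MeasureTheory.AEEqFun

variable {α : Type*} [MeasurableSpace α] {μ : Measure α}

theorem ae_nonneg_of_nonneg {f : α →ₘ[μ] ℝ} (hf : 0 ≤ f) : ∀ᵐ x ∂μ, 0 ≤ f x := by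
  filter_upwards [coeFn_le.2 hf, coeFn_zero (β := ℝ) (μ := μ)] with x hle hzero
  rwa [hzero] at hle

theorem ae_le_mul_of_le_mul {f g k : α →ₘ[μ] ℝ} (hle : f ≤ g * k) :
    ∀ᵐ x ∂μ, f x ≤ g x * k x := by
  filter_upwards [coeFn_le.2 hle, coeFn_mul g k] with x hle hmul
  rwa [hmul] at hle

end MeasureTheory.AEEqFun

namespace RNTheory

variable {Ω : Type*} [MeasurableSpace Ω] {μ : Measure Ω} {K : Type*} [RCLike K]
  {S : Type*} [AddCommGroup S] [Module (Ω →ₘ[μ] K) S] {nrm : S → Ω →ₘ[μ] ℝ}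
  {ι : Type*} {l : Filter ι}

namespace IsRNNorm

theorem ae_nonneg (h : IsRNNorm K nrm) (v : S) : ∀ᵐ ω ∂μ, 0 ≤ nrm v ω :=
  ae_nonneg_of_nonneg (h.nonneg v)

theorem ae_add_le (h : IsRNNorm K nrm) (u v : S) :
    ∀ᵐ ω ∂μ, nrm (u + v) ω ≤ nrm u ω + nrm v ω := by
  filter_upwards [coeFn_le.2 (h.add_le u v), coeFn_add (nrm u) (nrm v)] with ω hle hadd
  rwa [hadd] at hle

theorem ae_smul (h : IsRNNorm K nrm) (ξ : Ω →ₘ[μ] K) (v : S) :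
    ∀ᵐ ω ∂μ, nrm (ξ • v) ω = ‖ξ ω‖ * nrm v ω := by
  rw [h.smul_eq]
  filter_upwards [coeFn_mul (l0abs ξ) (nrm v), coeFn_comp (fun a : K => ‖a‖) continuous_norm ξ]
    with ω hmul habs
  rw [hmul, Pi.mul_apply, l0abs, habs, Function.comp_apply]

theorem ae_rconst_smul (h : IsRNNorm K nrm) (t : ℝ) (v : S) :
    ∀ᵐ ω ∂μ, nrm (rconst K μ t • v) ω = |t| * nrm v ω := by
  filter_upwards [h.ae_smul (rconst K μ t) v, coeFn_const (μ := μ) Ω (RCLike.ofReal t : K)]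
    with ω hsmul hconst
  rw [hsmul, rconst, hconst, Function.const_apply, RCLike.norm_ofReal]

theorem ae_zero (h : IsRNNorm K nrm) : ∀ᵐ ω ∂μ, nrm (0 : S) ω = 0 := by
  filter_upwards [h.ae_smul 0 (0 : S), coeFn_zero (β := K) (μ := μ)] with ω hsmul hzero
  rwa [smul_zero, hzero, Pi.zero_apply, norm_zero, zero_mul] at hsmul

theorem ae_neg (h : IsRNNorm K nrm) (v : S) : ∀ᵐ ω ∂μ, nrm (-v) ω = nrm v ω := by
  filter_upwards [h.ae_smul (-1) v, coeFn_neg (1 : Ω →ₘ[μ] K), coeFn_one (β := K) (μ := μ)]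
    with ω hsmul hneg hone
  rwa [neg_one_smul, hneg, Pi.neg_apply, hone, Pi.one_apply, norm_neg, norm_one,
    one_mul] at hsmul

theorem ae_sub_comm (h : IsRNNorm K nrm) (u v : S) :
    ∀ᵐ ω ∂μ, nrm (u - v) ω = nrm (v - u) ω := by
  simpa only [neg_sub] using h.ae_neg (v - u)

theorem ae_sub_le (h : IsRNNorm K nrm) (u v : S) :
    ∀ᵐ ω ∂μ, nrm (u - v) ω ≤ nrm u ω + nrm v ω := by
  filter_upwards [h.ae_add_le u (-v), h.ae_neg v] with ω hadd hneg
  rwa [← sub_eq_add_neg, hneg] at hadd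

theorem ae_sum_le (h : IsRNNorm K nrm) (s : Finset ι) (v : ι → S) :
    ∀ᵐ ω ∂μ, nrm (∑ i ∈ s, v i) ω ≤ ∑ i ∈ s, nrm (v i) ω := by
  classical
  induction s using Finset.induction_on with
  | empty =>
    filter_upwards [h.ae_zero] with ω hω
    simp [hω]
  | insert i s hi ih =>
    filter_upwards [ih, h.ae_add_le (v i) (∑ j ∈ s, v j)] with ω hsum hadd
    rw [Finset.sum_insert hi, Finset.sum_insert hi]
    linarith

theorem measureReal_add_le [IsFiniteMeasure μ] (h : IsRNNorm K nrm) (u v : S) (ε η : ℝ) :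
    μ.real {ω | ε + η ≤ nrm (u + v) ω} ≤
      μ.real {ω | ε ≤ nrm u ω} + μ.real {ω | η ≤ nrm v ω} := by
  calc μ.real {ω | ε + η ≤ nrm (u + v) ω}
      ≤ μ.real ({ω | ε ≤ nrm u ω} ∪ {ω | η ≤ nrm v ω}) := by
        refine ENNReal.toReal_mono (measure_ne_top _ _) (measure_mono_ae ?_)
        filter_upwards [h.ae_add_le u v] with ω htri (hω : ε + η ≤ nrm (u + v) ω)
        show ε ≤ nrm u ω ∨ η ≤ nrm v ω
        by_contra! hsmall
        linarith
    _ ≤ _ := measureReal_union_le _ _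

variable [IsProbabilityMeasure μ]

theorem mem_Nset_iff {x₀ y : S} {ε lam : ℝ} :
    y ∈ Nset nrm x₀ ε lam ↔ μ.real {ω | ε ≤ nrm (y - x₀) ω} < lam := by
  have hmeas : MeasurableSet {ω | ε ≤ nrm (y - x₀) ω} :=
    (nrm (y - x₀)).stronglyMeasurable.measurable measurableSet_Ici
  have hcompl : {ω | nrm (y - x₀) ω < ε} = {ω | ε ≤ nrm (y - x₀) ω}ᶜ := by
    ext; simp
  rw [Nset, mem_ofPred_eq, ← measureReal_def, hcompl, probReal_compl_eq_one_sub hmeas]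
  constructor <;> intro <;> linarith

theorem Nset_mem_nhds (h : IsRNNorm K nrm) (x₀ : S) {ε lam : ℝ} (hε : 0 < ε) (hlam : 0 < lam) :
    Nset nrm x₀ ε lam ∈ @nhds S (elTop nrm) x₀ := by
  let := elTop nrm
  -- `Nset` need not be open, but the points lying in a strictly smaller one form an open set.
  set U := {y | ∃ ε' < ε, ∃ lam' < lam, μ.real {ω | ε' ≤ nrm (y - x₀) ω} < lam'}
  have hUsub : U ⊆ Nset nrm x₀ ε lam := by
    rintro y ⟨ε', hε', lam', hlam', hy⟩
    refine mem_Nset_iff.2 ((measureReal_mono fun ω hω => ?_).trans_lt (hy.trans hlam'))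
    exact hε'.le.trans hω
  have hx₀U : x₀ ∈ U := by
    refine ⟨ε / 2, half_lt_self hε, lam / 2, half_lt_self hlam, ?_⟩
    have hnull : μ {ω | ε / 2 ≤ nrm 0 ω} = 0 := by
      rw [measure_eq_zero_iff_ae_notMem]
      filter_upwards [h.ae_zero] with ω hω
      simp [hω, hε]
    rw [measureReal_def, sub_self, hnull, ENNReal.toReal_zero]
    exact half_pos hlam
  have hUopen : IsOpen U := by
    rintro y ⟨ε', hε', lam', hlam', hy⟩
    refine ⟨(ε - ε') / 2, by linarith, min ((lam - lam') / 2) (1 / 2),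
      lt_min (by linarith) (by norm_num), (min_le_right _ _).trans_lt (by norm_num),
      fun z hz => ⟨(ε - ε') / 2 + ε', by linarith, min ((lam - lam') / 2) (1 / 2) + lam',
        by linarith [min_le_left ((lam - lam') / 2) (1 / 2)], ?_⟩⟩
    have htri := h.measureReal_add_le (z - y) (y - x₀) ((ε - ε') / 2) ε'
    rw [sub_add_sub_cancel] at htri
    linarith [mem_Nset_iff.1 hz]
  exact mem_nhds_iff.2 ⟨U, hUsub, hUopen, hx₀U⟩

theorem tendsto_elTop_iff_measureReal (h : IsRNNorm K nrm) {f : ι → S} {a : S} :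
    Tendsto f l (@nhds S (elTop nrm) a) ↔
      ∀ ε > 0, Tendsto (fun i => μ.real {ω | ε ≤ nrm (f i - a) ω}) l (𝓝 0) := by
  let := elTop nrm
  refine ⟨fun hf ε hε => ?_, fun hf U hU => ?_⟩
  · refine tendsto_order.2 ⟨fun b hb => Eventually.of_forall fun i =>
      hb.trans_le measureReal_nonneg, fun lam hlam => ?_⟩
    filter_upwards [hf (h.Nset_mem_nhds a hε hlam)] with i hi
    exact mem_Nset_iff.1 hi
  · obtain ⟨V, hVU, hVopen, haV⟩ := mem_nhds_iff.1 hU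
    obtain ⟨ε, hε, lam, hlam, -, hsub⟩ := hVopen a haV
    refine mem_map.2 ?_
    filter_upwards [(tendsto_order.1 (hf ε hε)).2 lam hlam] with i hi
    exact hVU (hsub (mem_Nset_iff.2 hi))

theorem tendsto_elTop_iff (h : IsRNNorm K nrm) {f : ι → S} {a : S} :
    Tendsto f l (@nhds S (elTop nrm) a) ↔
      TendstoInMeasure μ (fun i => ⇑(nrm (f i - a))) l 0 := by
  rw [h.tendsto_elTop_iff_measureReal, tendstoInMeasure_iff_measureReal_norm]
  refine forall₂_congr fun ε _ => ?_
  congr! 2 with i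
  refine measureReal_congr ?_
  filter_upwards [h.ae_nonneg (f i - a)] with ω hω
  show (ε ≤ nrm (f i - a) ω) = (ε ≤ ‖nrm (f i - a) ω - (0 : Ω → ℝ) ω‖)
  rw [Pi.zero_apply, sub_zero, Real.norm_of_nonneg hω]

theorem tendsto_elTop_of_ae_le_mul (h : IsRNNorm K nrm) {ξ : Ω → ℝ}
    (hξ : AEStronglyMeasurable ξ μ) {g : ι → Ω → ℝ} (hg : TendstoInMeasure μ g l 0)
    {f : ι → S} {a : S} (hfg : ∀ᶠ i in l, ∀ᵐ ω ∂μ, nrm (f i - a) ω ≤ ξ ω * g i ω) :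
    Tendsto f l (@nhds S (elTop nrm) a) := by
  rw [h.tendsto_elTop_iff]
  refine (hg.mul_left hξ).of_ae_norm_le ?_
  filter_upwards [hfg] with i hi
  filter_upwards [hi, h.ae_nonneg (f i - a)] with ω hle hnonneg
  rw [Real.norm_of_nonneg hnonneg]
  exact hle.trans (le_abs_self _)

end IsRNNorm

theorem rconst_neg (a : ℝ) : rconst K μ (-a) = -rconst K μ a := by
  simp only [rconst, RCLike.ofReal_neg]
  rfl

theorem rconst_mul (a b : ℝ) : rconst K μ a * rconst K μ b = rconst K μ (a * b) := by
  simp only [rconst, RCLike.ofReal_mul]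
  rfl

theorem rconst_one : rconst K μ 1 = 1 := by
  simp only [rconst, RCLike.ofReal_one]
  rfl

theorem rconst_smul_rconst_inv_smul {t : ℝ} (ht : t ≠ 0) (v : S) :
    rconst K μ t • rconst K μ t⁻¹ • v = v := by
  rw [smul_smul, rconst_mul, mul_inv_cancel₀ ht, rconst_one, one_smul]

variable {T : ℝ → S →ₗ[Ω →ₘ[μ] K] S}

namespace IsC0Semigroup

variable [IsFiniteMeasure μ]

theorem apply_add_s15 (hT : IsC0Semigroup K nrm T) {s t : ℝ} (hs : 0 ≤ s) (ht : 0 ≤ t) (x : S) :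
    T (s + t) x = T s (T t x) := by
  rw [hT.comp_eq s t hs ht, LinearMap.comp_apply]

theorem apply_comm (hT : IsC0Semigroup K nrm T) {s t : ℝ} (hs : 0 ≤ s) (ht : 0 ≤ t) (x : S) :
    T s (T t x) = T t (T s x) := by
  rw [← hT.apply_add_s15 hs ht, ← hT.apply_add_s15 ht hs, add_comm]

theorem sum_range_apply_sub (hT : IsC0Semigroup K nrm T) {τ : ℝ} (hτ : 0 ≤ τ) (n : ℕ) (x : S) :
    ∑ i ∈ Finset.range n, T (i * τ) (T τ x - x) = T (n * τ) x - x := by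
  have hstep (i : ℕ) : T (i * τ) (T τ x - x) = T ((i + 1 : ℕ) * τ) x - T (i * τ) x := by
    rw [map_sub, ← hT.apply_add_s15 (by positivity) hτ, Nat.cast_succ, add_one_mul]
  rw [Finset.sum_congr rfl fun i _ => hstep i]
  exact (Finset.sum_range_sub (fun i : ℕ => T (i * τ) x) n).trans (by simp [hT.id_eq])

theorem ae_nrm_apply_natCast_mul_le (hT : IsC0Semigroup K nrm T) {s : ℝ} (hs : 0 ≤ s)
    {ξ : Ω → ℝ} (hξ : ∀ᵐ ω ∂μ, 0 ≤ ξ ω)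
    (hbound : ∀ v, ∀ᵐ ω ∂μ, nrm (T s v) ω ≤ ξ ω * nrm v ω) (n : ℕ) (v : S) :
    ∀ᵐ ω ∂μ, nrm (T (n * s) v) ω ≤ ξ ω ^ n * nrm v ω := by
  induction n with
  | zero => simp [hT.id_eq]
  | succ n ih =>
    rw [Nat.cast_succ, add_one_mul, add_comm, hT.apply_add_s15 hs (by positivity)]
    filter_upwards [hbound (T (n * s) v), ih, hξ] with ω hstep hn hξω
    calc nrm (T s (T (n * s) v)) ω ≤ ξ ω * nrm (T (n * s) v) ω := hstep
      _ ≤ ξ ω * (ξ ω ^ n * nrm v ω) := mul_le_mul_of_nonneg_left hn hξω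
      _ = ξ ω ^ (n + 1) * nrm v ω := by ring

end IsC0Semigroup

-- Writing `T t = T (t / n) ^ n` with `t / n ≤ L` spreads the bound on `[0, L]` to `[0, r]`.
theorem IsASBounded.exists_ae_bound_Icc [IsFiniteMeasure μ] (hT : IsC0Semigroup K nrm T)
    (hb : IsASBounded K nrm T) (r : ℝ) :
    ∃ ξ : Ω → ℝ, AEStronglyMeasurable ξ μ ∧ (∀ᵐ ω ∂μ, 0 ≤ ξ ω) ∧
      ∀ t ∈ Icc 0 r, ∀ v, ∀ᵐ ω ∂μ, nrm (T t v) ω ≤ ξ ω * nrm v ω := by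
  obtain ⟨L, hL, ξ, hξ0, hξ⟩ := hb
  obtain ⟨n, hn⟩ := exists_nat_gt (r / L)
  refine ⟨⇑ξ ^ n, ξ.aestronglyMeasurable.pow n, ?_, fun t ht v => ?_⟩
  · filter_upwards [ae_nonneg_of_nonneg hξ0] with ω hω
    exact pow_nonneg hω n
  have hn0 : (0 : ℝ) < n := (div_nonneg (ht.1.trans ht.2) hL.le).trans_lt hn
  have hrL : r < n * L := (div_lt_iff₀ hL).1 hn
  have hstep : t / n ∈ Icc 0 L :=
    ⟨div_nonneg ht.1 hn0.le, (div_le_iff₀ hn0).2 (by linarith [ht.2])⟩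
  have := hT.ae_nrm_apply_natCast_mul_le hstep.1 (ae_nonneg_of_nonneg hξ0)
    (fun w => ae_le_mul_of_le_mul (hξ _ hstep w)) n v
  rwa [mul_div_cancel₀ t hn0.ne'] at this

namespace GenRel

variable [IsProbabilityMeasure μ] {x y : S}

theorem apply (h : IsRNNorm K nrm) (hT : IsC0Semigroup K nrm T) (hxy : GenRel K nrm T x y)
    {t : ℝ} (ht : 0 ≤ t) : GenRel K nrm T (T t x) (T t y) := by
  obtain ⟨ξ, -, hξ⟩ := hT.bounded t ht
  refine h.tendsto_elTop_of_ae_le_mul ξ.aestronglyMeasurable (h.tendsto_elTop_iff.1 hxy) ?_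
  filter_upwards [self_mem_nhdsWithin] with s (hs : 0 < s)
  rw [hT.apply_comm hs.le ht, ← map_sub, ← _root_.map_smul, ← map_sub]
  exact ae_le_mul_of_le_mul (hξ _)

theorem tendsto_right (h : IsRNNorm K nrm) (hT : IsC0Semigroup K nrm T)
    (hxy : GenRel K nrm T x y) {t : ℝ} (ht : 0 ≤ t) :
    Tendsto (fun dt => rconst K μ dt⁻¹ • (T (t + dt) x - T t x)) (𝓝[>] 0)
      (@nhds S (elTop nrm) (T t y)) := by
  refine Tendsto.congr' ?_ (hxy.apply h hT ht)
  filter_upwards [self_mem_nhdsWithin] with dt (hdt : 0 < dt)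
  rw [add_comm, hT.apply_add_s15 hdt.le ht]

theorem tendsto_left (h : IsRNNorm K nrm) (hT : IsC0Semigroup K nrm T)
    (hb : IsASBounded K nrm T) (hxy : GenRel K nrm T x y) {t : ℝ} :
    Tendsto (fun dt => rconst K μ dt⁻¹ • (T (t + dt) x - T t x)) (𝓝[Ico (-t) 0] 0)
      (@nhds S (elTop nrm) (T t y)) := by
  obtain ⟨ξ, hξm, hξ0, hξ⟩ := hb.exists_ae_bound_Icc hT t
  have hneg : Tendsto Neg.neg (𝓝[Ico (-t) 0] (0 : ℝ)) (𝓝[>] 0) := by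
    simpa using
      (tendsto_neg_nhdsLT (a := (0 : ℝ))).mono_left (nhdsWithin_mono _ Ico_subset_Iio_self)
  have hquot := h.tendsto_elTop_iff.1 (Tendsto.comp hxy hneg)
  have hcont := h.tendsto_elTop_iff.1 ((hT.strong_cont y).comp hneg)
  have hsum := hquot.add hcont
  rw [add_zero] at hsum
  refine h.tendsto_elTop_of_ae_le_mul hξm hsum ?_
  filter_upwards [self_mem_nhdsWithin] with dt ⟨hdt_ge, hdt_lt⟩
  have hshift (v : S) : T t v = T (t + dt) (T (-dt) v) := by
    rw [← hT.apply_add_s15 (by linarith) (by linarith), add_neg_cancel_right]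
  have hquot_neg : rconst K μ dt⁻¹ • (x - T (-dt) x) = rconst K μ (-dt)⁻¹ • (T (-dt) x - x) := by
    rw [inv_neg, rconst_neg, neg_smul, ← smul_neg, neg_sub]
  have key : rconst K μ dt⁻¹ • (T (t + dt) x - T t x) - T t y =
      T (t + dt) ((rconst K μ (-dt)⁻¹ • (T (-dt) x - x) - y) - (T (-dt) y - y)) := by
    rw [hshift x, hshift y, ← map_sub, ← _root_.map_smul, ← map_sub, sub_sub_sub_cancel_right,
      hquot_neg]
  rw [key]
  filter_upwards [hξ (t + dt) ⟨by linarith, by linarith⟩ _, h.ae_sub_le _ _, hξ0]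
    with ω hbound htri hξω
  exact hbound.trans (mul_le_mul_of_nonneg_left htri hξω)

theorem tendsto_deriv (h : IsRNNorm K nrm) (hT : IsC0Semigroup K nrm T)
    (hb : IsASBounded K nrm T) (hxy : GenRel K nrm T x y) {t : ℝ} (ht : 0 ≤ t) :
    Tendsto (fun dt => rconst K μ dt⁻¹ • (T (t + dt) x - T t x))
      (𝓝[{dt | dt ≠ 0 ∧ 0 ≤ t + dt}] 0) (@nhds S (elTop nrm) (T t y)) := by
  have hset : {dt : ℝ | dt ≠ 0 ∧ 0 ≤ t + dt} = Ico (-t) 0 ∪ Ioi 0 := by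
    ext dt
    simp only [mem_ofPred_eq, mem_union, mem_Ico, mem_Ioi]
    constructor
    · rintro ⟨hne, hle⟩
      rcases hne.lt_or_gt with hlt | hgt
      · exact Or.inl ⟨by linarith, hlt⟩
      · exact Or.inr hgt
    · rintro (⟨hge, hlt⟩ | hgt)
      · exact ⟨hlt.ne, by linarith⟩
      · exact ⟨hgt.ne', by linarith⟩
  rw [hset, nhdsWithin_union, tendsto_sup]
  exact ⟨hxy.tendsto_left h hT hb, hxy.tendsto_right h hT ht⟩

theorem tendsto_riemannSum (h : IsRNNorm K nrm) (hT : IsC0Semigroup K nrm T)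
    (hb : IsASBounded K nrm T) (hxy : GenRel K nrm T x y) {r : ℝ} (hr : 0 < r) :
    Tendsto (fun n : ℕ => rconst K μ (r / n) • ∑ i ∈ Finset.range n, T (i * r / n) y) atTop
      (@nhds S (elTop nrm) (T r x - x)) := by
  obtain ⟨ξ, hξm, hξ0, hξ⟩ := hb.exists_ae_bound_Icc hT r
  have hmesh : Tendsto (fun n : ℕ => r / n) atTop (𝓝[>] 0) :=
    tendsto_nhdsWithin_iff.2 ⟨tendsto_const_div_atTop_nhds_zero_nat r,
      (eventually_gt_atTop 0).mono fun n hn => div_pos hr (Nat.cast_pos.2 hn)⟩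
  refine h.tendsto_elTop_of_ae_le_mul (ξ := fun ω => r * ξ ω)
    (aestronglyMeasurable_const.mul hξm) (h.tendsto_elTop_iff.1 (Tendsto.comp hxy hmesh)) ?_
  filter_upwards [eventually_gt_atTop 0] with n hn
  set τ := r / n
  have hτ : 0 < τ := div_pos hr (Nat.cast_pos.2 hn)
  have hnτ : (n : ℝ) * τ = r := mul_div_cancel₀ r (Nat.cast_pos.2 hn).ne'
  set D := rconst K μ τ⁻¹ • (T τ x - x)
  have htel := hT.sum_range_apply_sub hτ.le n x
  rw [hnτ] at htel
  have hsum : rconst K μ τ • ∑ i ∈ Finset.range n, T (i * r / n) y - (T r x - x) =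
      ∑ i ∈ Finset.range n, T (i * τ) (rconst K μ τ • (y - D)) := by
    rw [← htel, Finset.smul_sum, ← Finset.sum_sub_distrib]
    refine Finset.sum_congr rfl fun i _ => ?_
    rw [mul_div_assoc, ← _root_.map_smul, ← map_sub, smul_sub,
      rconst_smul_rconst_inv_smul hτ.ne']
  have hterm : ∀ i ∈ Finset.range n, ∀ᵐ ω ∂μ,
      nrm (T (i * τ) (rconst K μ τ • (y - D))) ω ≤ ξ ω * (τ * nrm (D - y) ω) := by
    intro i hi
    have hiτ : (i : ℝ) * τ ∈ Icc 0 r := ⟨by positivity, by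
      rw [← hnτ]
      exact mul_le_mul_of_nonneg_right (by exact_mod_cast (Finset.mem_range.1 hi).le) hτ.le⟩
    filter_upwards [hξ _ hiτ _, h.ae_rconst_smul τ (y - D), h.ae_sub_comm y D]
      with ω hbound hsmul hcomm
    rwa [hsmul, hcomm, abs_of_pos hτ] at hbound
  rw [hsum]
  filter_upwards [h.ae_sum_le _ _, (eventually_all_finset _).2 hterm] with ω hle hterms
  calc nrm (∑ i ∈ Finset.range n, T (i * τ) (rconst K μ τ • (y - D))) ω
      ≤ ∑ i ∈ Finset.range n, ξ ω * (τ * nrm (D - y) ω) := hle.trans (Finset.sum_le_sum hterms)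
    _ = r * ξ ω * nrm (D - y) ω := by
      rw [Finset.sum_const, Finset.card_range, nsmul_eq_mul, ← hnτ]
      ring

end GenRel

end RNTheory

theorem generator_calculus_for_as_bounded_semigroup_general
    {Ω : Type*} [MeasurableSpace Ω] (μ : Measure Ω) [IsProbabilityMeasure μ]
    (K : Type*) [RCLike K] {S : Type*} [AddCommGroup S] [Module (Ω →ₘ[μ] K) S]
    (nrm : S → Ω →ₘ[μ] ℝ) (h : IsRNNorm K nrm)
    (T : ℝ → S →ₗ[Ω →ₘ[μ] K] S) (hT : IsC0Semigroup K nrm T)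
    (hb : IsASBounded K nrm T) :
    ∀ x y, GenRel K nrm T x y →
      (∀ t : ℝ, 0 ≤ t →
        GenRel K nrm T (T t x) (T t y) ∧
        Tendsto (fun dt : ℝ => rconst K μ dt⁻¹ • (T (t + dt) x - T t x))
          (nhdsWithin 0 {dt : ℝ | dt ≠ 0 ∧ 0 ≤ t + dt})
          (@nhds S (elTop nrm) (T t y))) ∧
      (∀ r : ℝ, 0 < r →
        Tendsto (fun n : ℕ =>
            rconst K μ (r / n) • (Finset.range n).sum (fun i => T (i * r / n) y))
          atTop (@nhds S (elTop nrm) (T r x - x))) :=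
  fun _ _ hxy => ⟨fun _ ht => ⟨hxy.apply h hT ht, hxy.tendsto_deriv h hT hb ht⟩,
    fun _ hr => hxy.tendsto_riemannSum h hT hb hr⟩

/-- Let `{T(t) : t ≥ 0}` be an a.s. bounded `C₀`-semigroup on a complete
`RN` module `S` with generator `(A, D(A))`. For every `x ∈ D(A)` (with `y = Ax`):
`T(t)x ∈ D(A)` with `A T(t)x = T(t)Ax`, the orbit map is differentiable with
`(d/dt) T(t)x = T(t)Ax`, and for every `r > 0` the Riemann integral
`∫₀ʳ T(s)Ax ds = ∫₀ʳ A T(s)x ds` (the limit of the Riemann sums of `s ↦ T(s)Ax`) equals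
`T(r)x - x`. -/
theorem generator_calculus_for_as_bounded_semigroup
    {Ω : Type*} [MeasurableSpace Ω] (μ : Measure Ω) [IsProbabilityMeasure μ]
    (K : Type*) [RCLike K] {S : Type*} [AddCommGroup S] [Module (Ω →ₘ[μ] K) S]
    (nrm : S → Ω →ₘ[μ] ℝ) (h : IsRNNorm K nrm) (hcomplete : IsCompleteRN nrm)
    (T : ℝ → S →ₗ[Ω →ₘ[μ] K] S) (hT : IsC0Semigroup K nrm T)
    (hb : IsASBounded K nrm T) :
    ∀ x y, GenRel K nrm T x y →
      (∀ t : ℝ, 0 ≤ t →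
        GenRel K nrm T (T t x) (T t y) ∧
        Tendsto (fun dt : ℝ => rconst K μ dt⁻¹ • (T (t + dt) x - T t x))
          (nhdsWithin 0 {dt : ℝ | dt ≠ 0 ∧ 0 ≤ t + dt})
          (@nhds S (elTop nrm) (T t y))) ∧
      (∀ r : ℝ, 0 < r →
        Tendsto (fun n : ℕ =>
            rconst K μ (r / n) • (Finset.range n).sum (fun i => T (i * r / n) y))
          atTop (@nhds S (elTop nrm) (T r x - x))) :=
  generator_calculus_for_as_bounded_semigroup_general μ K nrm h T hT hb
end
end
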